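/- arXiv:1104.1508 — 5 statements merged into one kernel-verified Lean document; each statement's English description precedes it below -/
import Mathlib

section
/- Let T ⊆ ℝ^n and suppose I ⊆ {1,...,n} is δ-shattered by the absolutely convex hull of T, meaning there exists a level function s : I → ℝ such that for every J ⊆ I there is t ∈ absconv(T) with t_i ≥ s_i + δ for i ∈ J and t_i ≤ s_i - δ for i ∈ I \ J. Then the hereditary discrepancy of T satisfies Hdisc(T) ≥ δ·|I|. Consequently Hdisc(T) ≥ sup_{δ>0} δ·VC(absconv(T), δ). -/
/-- Discrepancy of the coordinate projection of `T ⊆ ℝ^n` onto a subset `I` of coordinates. -/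
noncomputable def discOn {n : ℕ} (T : Set (Fin n → ℝ)) (I : Finset (Fin n)) : ℝ :=
  sInf {x | ∃ ε : Fin n → ℝ, (∀ i, ε i = 1 ∨ ε i = -1) ∧
    x = sSup ((fun t => |∑ i ∈ I, ε i * t i|) '' T)}

/-- The hereditary discrepancy: `sup_{I ⊆ {1,...,n}} disc(P_I T)`. -/
noncomputable def Hdisc {n : ℕ} (T : Set (Fin n → ℝ)) : ℝ :=
  sSup {x | ∃ I : Finset (Fin n), x = discOn T I}

/-- If `I` is `δ`-shattered by the absolutely convex hull of `T` (with level function `s`),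
then `Hdisc(T) ≥ δ·|I|`. -/
theorem stmt2 {n : ℕ} (T : Set (Fin n → ℝ)) (δ : ℝ) (hδ : 0 < δ)
    (I : Finset (Fin n)) (s : Fin n → ℝ)
    (hbdd : ∀ (ε : Fin n → ℝ) (J : Finset (Fin n)),
      BddAbove ((fun t => |∑ i ∈ J, ε i * t i|) '' T))
    (hshatter : ∀ J ⊆ I, ∃ t ∈ convexHull ℝ (T ∪ -T),
      (∀ i ∈ J, s i + δ ≤ t i) ∧ ∀ i ∈ I \ J, t i ≤ s i - δ) :
    δ * I.card ≤ Hdisc T := by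
  classical
  -- Key estimate: for each valid sign vector ε, δ|I| ≤ sSup of |∑ ε t| over T.
  have key : ∀ ε : Fin n → ℝ, (∀ i, ε i = 1 ∨ ε i = -1) →
      δ * I.card ≤ sSup ((fun t => |∑ i ∈ I, ε i * t i|) '' T) := by
    intro ε hε
    set S := sSup ((fun t => |∑ i ∈ I, ε i * t i|) '' T) with hS
    -- bound on T ∪ -T
    have hbound : ∀ u ∈ T ∪ -T, |∑ i ∈ I, ε i * u i| ≤ S := by
      intro u hu
      rcases hu with hu | hu
      · exact le_csSup (hbdd ε I) ⟨u, hu, rfl⟩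
      · have h1 : (-u) ∈ T := by simpa using hu
        have h2 : |∑ i ∈ I, ε i * (-u) i| ≤ S := le_csSup (hbdd ε I) ⟨-u, h1, rfl⟩
        have : ∑ i ∈ I, ε i * (-u) i = -∑ i ∈ I, ε i * u i := by
          simp [mul_comm, ← Finset.sum_neg_distrib]
        rw [this, abs_neg] at h2
        exact h2
    -- bound on the convex hull
    have hconv : ∀ t ∈ convexHull ℝ (T ∪ -T), |∑ i ∈ I, ε i * t i| ≤ S := by
      have hC : Convex ℝ {t : Fin n → ℝ | |∑ i ∈ I, ε i * t i| ≤ S} := by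
        intro x hx y hy a b ha hb hab
        simp only [Set.mem_setOf_eq] at hx hy ⊢
        have hsum : ∑ i ∈ I, ε i * (a • x + b • y) i
            = a * ∑ i ∈ I, ε i * x i + b * ∑ i ∈ I, ε i * y i := by
          rw [Finset.mul_sum, Finset.mul_sum, ← Finset.sum_add_distrib]
          refine Finset.sum_congr rfl fun i _ => ?_
          simp [Pi.add_apply, Pi.smul_apply, smul_eq_mul]
          ring
        rw [hsum]
        calc |a * ∑ i ∈ I, ε i * x i + b * ∑ i ∈ I, ε i * y i|
            ≤ |a * ∑ i ∈ I, ε i * x i| + |b * ∑ i ∈ I, ε i * y i| := abs_add_le _ _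
          _ ≤ a * S + b * S := by
              rw [abs_mul, abs_mul, abs_of_nonneg ha, abs_of_nonneg hb]
              exact add_le_add (mul_le_mul_of_nonneg_left hx ha)
                (mul_le_mul_of_nonneg_left hy hb)
          _ = S := by rw [← add_mul, hab, one_mul]
      intro t ht
      exact convexHull_min hbound hC ht
    -- use shattering with J and I \ J
    set J := I.filter (fun i => ε i = 1) with hJ
    obtain ⟨t, htmem, ht1, ht2⟩ := hshatter J (Finset.filter_subset _ _)
    obtain ⟨t', ht'mem, ht'1, ht'2⟩ := hshatter (I \ J) (Finset.sdiff_subset)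
    have hIJ : I \ (I \ J) = J := by
      have := Finset.filter_subset (fun i => ε i = 1) I
      ext i; simp only [Finset.mem_sdiff]; constructor
      · rintro ⟨hi, h⟩
        by_contra hj; exact h ⟨hi, hj⟩
      · intro hj; exact ⟨this hj, fun h => h.2 hj⟩
    rw [hIJ] at ht'2
    have hterm : ∀ i ∈ I, 2 * δ ≤ ε i * (t i - t' i) := by
      intro i hi
      rcases hε i with h1 | h1
      · have hiJ : i ∈ J := Finset.mem_filter.mpr ⟨hi, h1⟩
        have a1 := ht1 i hiJ
        have a2 := ht'2 i hiJ
        rw [h1, one_mul]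
        linarith
      · have hiJ : i ∉ J := by
          intro h; have := (Finset.mem_filter.mp h).2; rw [h1] at this; norm_num at this
        have hi' : i ∈ I \ J := Finset.mem_sdiff.mpr ⟨hi, hiJ⟩
        have a1 := ht2 i hi'
        have a2 := ht'1 i hi'
        rw [h1]
        linarith
    have hsum : (2 * δ) * I.card ≤ ∑ i ∈ I, ε i * (t i - t' i) := by
      calc (2 * δ) * I.card = ∑ _i ∈ I, 2 * δ := by
            rw [Finset.sum_const, nsmul_eq_mul, mul_comm]
        _ ≤ _ := Finset.sum_le_sum hterm
    have hsplit : ∑ i ∈ I, ε i * (t i - t' i)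
        = (∑ i ∈ I, ε i * t i) - ∑ i ∈ I, ε i * t' i := by
      rw [← Finset.sum_sub_distrib]
      exact Finset.sum_congr rfl fun i _ => by ring
    have b1 := hconv t htmem
    have b2 := hconv t' ht'mem
    have c1 : ∑ i ∈ I, ε i * t i ≤ |∑ i ∈ I, ε i * t i| := le_abs_self _
    have c2 : -∑ i ∈ I, ε i * t' i ≤ |∑ i ∈ I, ε i * t' i| := neg_le_abs _
    rw [hsplit] at hsum
    linarith
  -- δ|I| ≤ discOn T I
  have hdisc : δ * I.card ≤ discOn T I := by
    apply le_csInf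
    · exact ⟨_, fun _ => 1, fun i => Or.inl rfl, rfl⟩
    · rintro x ⟨ε, hε, rfl⟩
      exact key ε hε
  -- discOn T I ≤ Hdisc T
  have hset : {x | ∃ I : Finset (Fin n), x = discOn T I}
      = Set.range (fun I => discOn T I) := by
    ext x; simp [eq_comm, Set.range]
  have hbdd2 : BddAbove {x | ∃ I : Finset (Fin n), x = discOn T I} := by
    rw [hset]; exact (Set.finite_range _).bddAbove
  exact le_trans hdisc (le_csSup hbdd2 ⟨I, rfl⟩)
end

section
/- There exists an absolute constant c > 0 such that the following holds. Let a ∈ ℝ^n, let ε₁,...,ε_n be independent Rademacher variables, set Z = ∑_{i=1}^n ε_i a_i and W = sgn(Z)·⌊|Z|⌋ (the integer part of Z with its sign). Then the Shannon entropy of the integer-valued random variable W satisfies H(W) ≤ c·Φ(1/(2|a|²)), where Φ(t) = log(e/t) for 0 < t ≤ 1 and Φ(t) = t·e^{-t+1} for t > 1. -/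
/-!
Put `t = 1 / (2|a|²)` and `p_z = P(W = z)`. Gibbs' inequality against the discrete Gaussian
weights `e^{-t z²}` gives, in nats, `H(W) ≤ t E[W²] + log ∑_z e^{-t z²}`, and the theta sum is at
most `(1 + e^{-t}) / (1 - e^{-t})`. For `t ≤ 1` we use `E[W²] ≤ E[Z²] = |a|²`, so the first term
is at most `1/2` and the second at most `log(4/t)`. For `t > 1`, Hoeffding's inequality gives
`p_z ≤ e^{-t z²}` for `z ≠ 0`, which makes both terms `O(t e^{-t})`.
-/

open MeasureTheory ProbabilityTheory

/-- `Φ(t) = log(e/t)` for `0 < t ≤ 1` and `Φ(t) = t e^{-t+1}` for `t > 1`. -/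
noncomputable def Phi (t : ℝ) : ℝ :=
  if t ≤ 1 then Real.log (Real.exp 1 / t) else t * Real.exp (-t + 1)

open Real Finset

theorem negMulLog_le_sub_sub_mul_log {p q : ℝ} (hp : 0 ≤ p) (hq : 0 < q) :
    negMulLog p ≤ q - p - p * log q := by
  have hpq : q * (p / q) = p := by field_simp
  have h := mul_le_mul_of_nonneg_left (negMulLog_le_one_sub_self (div_nonneg hp hq.le)) hq.le
  have hlog : p / q * negMulLog q = -(p * log q) := by rw [negMulLog]; field_simp
  rw [← hpq, negMulLog_mul, hpq, hlog]
  nlinarith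

/-- Gibbs' inequality, with the reference weights `q` left unnormalized. -/
theorem sum_negMulLog_le_of_sum_eq_one {ι : Type*} {s : Finset ι} {p q : ι → ℝ}
    (hp : ∀ i ∈ s, 0 ≤ p i) (hp1 : ∑ i ∈ s, p i = 1) (hq : ∀ i ∈ s, 0 < q i) :
    ∑ i ∈ s, negMulLog (p i) ≤ -∑ i ∈ s, p i * log (q i) + log (∑ i ∈ s, q i) := by
  have hs : s.Nonempty := nonempty_of_sum_ne_zero (by rw [hp1]; exact one_ne_zero)
  have hQ : 0 < ∑ i ∈ s, q i := sum_pos hq hs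
  calc ∑ i ∈ s, negMulLog (p i)
      ≤ ∑ i ∈ s, (q i / ∑ j ∈ s, q j - p i - p i * (log (q i) - log (∑ j ∈ s, q j))) := by
        gcongr with i hi
        rw [← log_div (hq i hi).ne' hQ.ne']
        exact negMulLog_le_sub_sub_mul_log (hp i hi) (div_pos (hq i hi) hQ)
    _ = -∑ i ∈ s, p i * log (q i) + log (∑ i ∈ s, q i) := by
        rw [sum_sub_distrib, sum_sub_distrib, ← sum_div, div_self hQ.ne', hp1]
        simp only [mul_sub, sum_sub_distrib, ← sum_mul, hp1]
        ring

theorem hasSum_pow_natAbs {r : ℝ} (h0 : 0 ≤ r) (h1 : r < 1) :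
    HasSum (fun z : ℤ ↦ r ^ z.natAbs) ((1 + r) / (1 - r)) := by
  have habs (n : ℕ) : (-(n + 1 : ℤ)).natAbs = n + 1 := by omega
  have hneg : HasSum (fun n : ℕ ↦ r ^ (-(n + 1 : ℤ)).natAbs) (r * (1 - r)⁻¹) := by
    simpa only [habs, pow_succ'] using (hasSum_geometric_of_lt_one h0 h1).mul_left r
  have hpos : HasSum (fun n : ℕ ↦ r ^ (n : ℤ).natAbs) (1 - r)⁻¹ := by
    simpa only [Int.natAbs_natCast] using hasSum_geometric_of_lt_one h0 h1
  convert hpos.of_nat_of_neg_add_one (f := fun z : ℤ ↦ r ^ z.natAbs) hneg using 1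
  field_simp [(sub_pos.mpr h1).ne']

theorem exp_neg_mul_sq_le_pow_natAbs {t : ℝ} (ht : 0 ≤ t) (z : ℤ) :
    exp (-t * z ^ 2) ≤ exp (-t) ^ z.natAbs := by
  rw [← exp_nat_mul, exp_le_exp]
  have h : ((z.natAbs : ℤ) : ℝ) ≤ ((z ^ 2 : ℤ) : ℝ) := Int.cast_le.mpr (Int.natAbs_le_self_sq z)
  rw [Nat.cast_natAbs, Int.cast_abs]
  push_cast at h
  nlinarith

theorem sq_mul_exp_neg_mul_sq_le_pow_natAbs {t : ℝ} (ht : 1 ≤ t) (z : ℤ) :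
    (z : ℝ) ^ 2 * exp (-t * z ^ 2) ≤ exp (-t) ^ z.natAbs := by
  set k := z.natAbs
  have hz : (z : ℝ) ^ 2 = (k : ℝ) ^ 2 := by rw [Nat.cast_natAbs, Int.cast_abs, sq_abs]
  -- `(k - 1)(k - 2) ≥ 0` for every natural number `k`
  have hk : 2 * ((k : ℝ) - 1) ≤ (k : ℝ) ^ 2 - k := by
    rcases Nat.lt_or_ge k 2 with h | h
    · interval_cases k <;> norm_num
    · have : (2 : ℝ) ≤ k := by exact_mod_cast h
      nlinarith
  have hk0 : 0 ≤ (k : ℝ) ^ 2 - k := by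
    have : (k : ℝ) ≤ k ^ 2 := by exact_mod_cast Nat.le_self_pow two_ne_zero k
    linarith
  have hk_le : (k : ℝ) ≤ exp ((k : ℝ) - 1) := by linarith [add_one_le_exp ((k : ℝ) - 1)]
  have hk_sq : (k : ℝ) ^ 2 ≤ exp (t * ((k : ℝ) ^ 2 - k)) := by
    calc (k : ℝ) ^ 2 ≤ exp ((k : ℝ) - 1) ^ 2 := by gcongr
      _ = exp (2 * ((k : ℝ) - 1)) := by rw [← exp_nat_mul]; push_cast; ring_nf
      _ ≤ exp (t * ((k : ℝ) ^ 2 - k)) :=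
          exp_le_exp.mpr (by nlinarith [mul_le_mul_of_nonneg_right ht hk0])
  calc (z : ℝ) ^ 2 * exp (-t * z ^ 2)
      ≤ exp (t * ((k : ℝ) ^ 2 - k)) * exp (-t * k ^ 2) := by
        rw [hz]; gcongr
    _ = exp (-t) ^ k := by rw [← exp_add, ← exp_nat_mul]; ring_nf

theorem sum_exp_neg_mul_sq_le {t : ℝ} (ht : 0 < t) (s : Finset ℤ) :
    ∑ z ∈ s, exp (-t * z ^ 2) ≤ (1 + exp (-t)) / (1 - exp (-t)) :=
  (sum_le_sum fun z _ ↦ exp_neg_mul_sq_le_pow_natAbs ht.le z).trans <|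
    sum_le_hasSum s (fun _ _ ↦ by positivity)
      (hasSum_pow_natAbs (exp_pos _).le (exp_lt_one_iff.mpr (by linarith)))

theorem sum_sq_mul_exp_neg_mul_sq_le {t : ℝ} (ht : 1 ≤ t) (s : Finset ℤ) :
    ∑ z ∈ s, (z : ℝ) ^ 2 * exp (-t * z ^ 2) ≤ 2 * exp (-t) / (1 - exp (-t)) := by
  set r := exp (-t)
  have hr1 : r < 1 := exp_lt_one_iff.mpr (by linarith)
  have hsum : 1 + ∑ z ∈ s.erase 0, r ^ z.natAbs ≤ (1 + r) / (1 - r) := by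
    have := sum_le_hasSum (insert 0 (s.erase 0)) (fun _ _ ↦ by positivity)
      (hasSum_pow_natAbs (exp_pos _).le hr1)
    rwa [sum_insert (notMem_erase 0 s), Int.natAbs_zero, pow_zero] at this
  have hsplit : (1 + r) / (1 - r) = 1 + 2 * r / (1 - r) := by
    field_simp [(sub_pos.mpr hr1).ne']; ring
  calc ∑ z ∈ s, (z : ℝ) ^ 2 * exp (-t * z ^ 2)
      = ∑ z ∈ s.erase 0, (z : ℝ) ^ 2 * exp (-t * z ^ 2) := (sum_erase s (by simp)).symm
    _ ≤ ∑ z ∈ s.erase 0, r ^ z.natAbs :=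
        sum_le_sum fun z _ ↦ sq_mul_exp_neg_mul_sq_le_pow_natAbs ht z
    _ ≤ 2 * r / (1 - r) := by linarith

theorem sum_negMulLog_le_of_gaussian_weights {s : Finset ℤ} {p : ℤ → ℝ} (hp : ∀ z, 0 ≤ p z)
    (hp1 : ∑ z ∈ s, p z = 1) {t : ℝ} (ht : 0 < t) :
    ∑ z ∈ s, negMulLog (p z) ≤
      t * ∑ z ∈ s, (z : ℝ) ^ 2 * p z + log ((1 + exp (-t)) / (1 - exp (-t))) := by
  have hs : s.Nonempty := nonempty_of_sum_ne_zero (by rw [hp1]; exact one_ne_zero)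
  have hgibbs := sum_negMulLog_le_of_sum_eq_one (fun z _ ↦ hp z) hp1
    (q := fun z : ℤ ↦ exp (-t * z ^ 2)) (fun z _ ↦ exp_pos _)
  have hmoment : -∑ z ∈ s, p z * log (exp (-t * z ^ 2)) = t * ∑ z ∈ s, (z : ℝ) ^ 2 * p z := by
    simp only [log_exp, mul_sum, ← sum_neg_distrib]
    exact sum_congr rfl fun z _ ↦ by ring
  have hlog : log (∑ z ∈ s, exp (-t * z ^ 2)) ≤ log ((1 + exp (-t)) / (1 - exp (-t))) :=
    log_le_log (sum_pos (fun z _ ↦ exp_pos _) hs) (sum_exp_neg_mul_sq_le ht s)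
  linarith

section EntropyBound

variable {s : Finset ℤ} {p : ℤ → ℝ} {t : ℝ}

theorem sum_negMulLog_le_Phi_of_le_one (hp : ∀ z, 0 ≤ p z) (hp1 : ∑ z ∈ s, p z = 1)
    (ht : 0 < t) (ht1 : t ≤ 1) (hmoment : t * ∑ z ∈ s, (z : ℝ) ^ 2 * p z ≤ 1 / 2) :
    ∑ z ∈ s, negMulLog (p z) ≤ 3 * Phi t := by
  have hPhi : Phi t = 1 - log t := by
    rw [Phi, if_pos ht1, log_div (exp_ne_zero 1) ht.ne', log_exp]
  have hr : exp (-t) ≤ 1 / (1 + t) := by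
    rw [exp_neg, inv_eq_one_div]
    gcongr
    linarith [add_one_le_exp t]
  set r := exp (-t)
  have hr1 : t / 2 ≤ 1 - r := by
    have : 1 / (1 + t) ≤ 1 - t / 2 := by rw [div_le_iff₀ (by linarith)]; nlinarith
    linarith
  have hratio : (1 + r) / (1 - r) ≤ 4 / t := by
    rw [div_le_div_iff₀ (by linarith) ht]
    nlinarith [exp_pos (-t)]
  have hlog : log ((1 + r) / (1 - r)) ≤ log 4 - log t := by
    rw [← log_div (by norm_num) ht.ne']
    exact log_le_log (div_pos (by positivity) (by linarith)) hratio
  have hlog4 : log 4 ≤ 3 / 2 := by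
    rw [show (4 : ℝ) = 2 ^ 2 by norm_num, log_pow]
    linarith [log_two_lt_d9]
  have hlogt : log t ≤ 0 := log_nonpos ht.le ht1
  linarith [sum_negMulLog_le_of_gaussian_weights hp hp1 ht]

theorem sum_negMulLog_le_Phi_of_one_lt (hp : ∀ z, 0 ≤ p z) (hp1 : ∑ z ∈ s, p z = 1)
    (ht : 1 < t) (htail : ∀ z ≠ 0, p z ≤ exp (-t * z ^ 2)) :
    ∑ z ∈ s, negMulLog (p z) ≤ 3 * Phi t := by
  set r := exp (-t)
  have hPhi : Phi t = exp 1 * (t * r) := by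
    rw [Phi, if_neg (by linarith), mul_left_comm, ← exp_add]; ring_nf
  have hr : r ≤ 1 / 2 := by
    have : exp 1 ≥ 2 := by linarith [exp_one_gt_d9]
    calc r ≤ exp (-1) := exp_le_exp.mpr (by linarith)
      _ = 1 / exp 1 := by rw [exp_neg, inv_eq_one_div]
      _ ≤ 1 / 2 := by gcongr
  have hr0 : 0 < r := exp_pos _
  have htail_sum : 2 * r / (1 - r) ≤ 4 * r := by
    rw [div_le_iff₀ (by linarith)]; nlinarith
  have hmoment : ∑ z ∈ s, (z : ℝ) ^ 2 * p z ≤ 4 * r := by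
    refine (sum_le_sum fun z _ ↦ ?_).trans ((sum_sq_mul_exp_neg_mul_sq_le ht.le s).trans htail_sum)
    rcases eq_or_ne z 0 with rfl | hz
    · simp
    · exact mul_le_mul_of_nonneg_left (htail z hz) (sq_nonneg _)
  have hlog : log ((1 + r) / (1 - r)) ≤ 4 * r := by
    have : (1 + r) / (1 - r) = 1 + 2 * r / (1 - r) := by
      field_simp [(show 1 - r ≠ 0 by linarith)]; ring
    linarith [log_le_sub_one_of_pos (show 0 < (1 + r) / (1 - r) by
      apply div_pos <;> linarith)]
  have he : (8 : ℝ) / 3 ≤ exp 1 := by linarith [exp_one_gt_d9]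
  have htr : 0 ≤ t * r := by positivity
  calc ∑ z ∈ s, negMulLog (p z) ≤ t * (4 * r) + 4 * r := by
        linarith [sum_negMulLog_le_of_gaussian_weights hp hp1 (by linarith : 0 < t),
          mul_le_mul_of_nonneg_left hmoment (by linarith : 0 ≤ t)]
    _ ≤ 8 / 3 * (3 * (t * r)) := by nlinarith
    _ ≤ 3 * Phi t := by rw [hPhi]; nlinarith

theorem sum_negMulLog_le_Phi (hp : ∀ z, 0 ≤ p z) (hp1 : ∑ z ∈ s, p z = 1) (ht : 0 < t)
    (hmoment : ∑ z ∈ s, (z : ℝ) ^ 2 * p z ≤ 1 / (2 * t))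
    (htail : ∀ z ≠ 0, p z ≤ exp (-t * z ^ 2)) :
    ∑ z ∈ s, negMulLog (p z) ≤ 3 * Phi t := by
  rcases le_or_gt t 1 with ht1 | ht1
  · refine sum_negMulLog_le_Phi_of_le_one hp hp1 ht ht1 ?_
    calc t * ∑ z ∈ s, (z : ℝ) ^ 2 * p z ≤ t * (1 / (2 * t)) := by gcongr
      _ = 1 / 2 := by field_simp
  · exact sum_negMulLog_le_Phi_of_one_lt hp hp1 ht1 htail

end EntropyBound

theorem neg_tsum_mul_logb_le_two_mul_sum_negMulLog {α : Type*} {p : α → ℝ} {s : Finset α}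
    (hp : ∀ x ∉ s, p x = 0) (hp0 : ∀ x, 0 ≤ p x) (hp1 : ∀ x, p x ≤ 1) :
    -∑' x, p x * logb 2 (p x) ≤ 2 * ∑ x ∈ s, negMulLog (p x) := by
  have hbits : -∑' x, p x * logb 2 (p x) = (∑ x ∈ s, negMulLog (p x)) / log 2 := by
    rw [tsum_eq_sum (s := s) fun x hx ↦ by simp [hp x hx], sum_div, ← sum_neg_distrib]
    exact sum_congr rfl fun x _ ↦ by rw [logb, negMulLog]; ring
  have hnats : 0 ≤ ∑ x ∈ s, negMulLog (p x) :=
    sum_nonneg fun x _ ↦ negMulLog_nonneg (hp0 x) (hp1 x)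
  have hlog2 : 1 / 2 < log 2 := by linarith [log_two_gt_d9]
  rw [hbits, div_le_iff₀ (by linarith)]
  nlinarith

noncomputable def intPart (x : ℝ) : ℤ := (if 0 ≤ x then 1 else -1) * ⌊|x|⌋

theorem measurable_intPart : Measurable intPart :=
  (Measurable.ite (measurableSet_le measurable_const measurable_id) measurable_const
    measurable_const).mul (Int.measurable_floor.comp measurable_abs)

theorem abs_intPart (x : ℝ) : |intPart x| = ⌊|x|⌋ := by
  have h := Int.floor_nonneg.mpr (abs_nonneg x)
  unfold intPart
  split_ifs <;> simp [abs_of_nonneg h]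

theorem abs_intPart_le (x : ℝ) : |(intPart x : ℝ)| ≤ |x| := by
  rw [← Int.cast_abs, abs_intPart]
  exact Int.floor_le _

theorem intPart_neg (x : ℝ) : intPart (-x) = -intPart x := by
  unfold intPart
  rcases lt_trichotomy x 0 with hx | rfl | hx
  · simp [hx.le, not_le.mpr hx]
  · simp
  · simp [hx.le, not_le.mpr (neg_neg_of_pos hx)]

theorem le_of_intPart_eq {x : ℝ} {z : ℤ} (hz : 0 < z) (h : intPart x = z) : (z : ℝ) ≤ x := by
  have h0 := Int.floor_nonneg.mpr (abs_nonneg x)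
  unfold intPart at h
  split_ifs at h with hx
  · rw [← h, one_mul, abs_of_nonneg hx]
    exact Int.floor_le x
  · omega

section Rademacher

variable {Ω : Type*} [MeasurableSpace Ω] {P : Measure Ω}

def IsRademacher (X : Ω → ℝ) (P : Measure Ω) : Prop :=
  P {ω | X ω = 1} = 1 / 2 ∧ P {ω | X ω = -1} = 1 / 2

namespace IsRademacher

variable [IsProbabilityMeasure P] {X : Ω → ℝ}

theorem ae_eq_one_or_neg_one (hX : Measurable X) (h : IsRademacher X P) :
    ∀ᵐ ω ∂P, X ω = 1 ∨ X ω = -1 := by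
  have hdisj : Disjoint {ω | X ω = 1} {ω | X ω = -1} :=
    Set.disjoint_left.mpr fun ω (h1 : X ω = 1) (h2 : X ω = -1) ↦ by linarith
  have hs : MeasurableSet ({ω | X ω = 1} ∪ {ω | X ω = -1}) :=
    (hX (measurableSet_singleton 1)).union (hX (measurableSet_singleton (-1)))
  refine mem_ae_iff.mpr ((prob_compl_eq_zero_iff hs).mpr ?_)
  rw [measure_union hdisj (hX (measurableSet_singleton _)), h.1, h.2, ENNReal.add_halves]

theorem integral_comp (hX : Measurable X) (h : IsRademacher X P) (f : ℝ → ℝ) :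
    ∫ ω, f (X ω) ∂P = (f 1 + f (-1)) / 2 := by
  have hm (x : ℝ) : MeasurableSet {ω | X ω = x} := hX (measurableSet_singleton x)
  have hae : (fun ω ↦ f (X ω)) =ᵐ[P]
      fun ω ↦ {ω | X ω = 1}.indicator (fun _ ↦ f 1) ω +
        {ω | X ω = -1}.indicator (fun _ ↦ f (-1)) ω := by
    filter_upwards [h.ae_eq_one_or_neg_one hX] with ω hω
    rcases hω with hω | hω <;> norm_num [Set.indicator_apply, hω]
  rw [integral_congr_ae hae, integral_add ((integrable_const _).indicator (hm 1))
    ((integrable_const _).indicator (hm (-1))), integral_indicator_const _ (hm 1),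
    integral_indicator_const _ (hm (-1)), measureReal_def, measureReal_def, h.1, h.2]
  simp only [one_div, ENNReal.toReal_inv, ENNReal.toReal_ofNat, smul_eq_mul]
  ring

theorem hasSubgaussianMGF_mul_const (hX : Measurable X) (h : IsRademacher X P) (b : ℝ) :
    HasSubgaussianMGF (fun ω ↦ X ω * b) (‖b‖₊ ^ 2) P := by
  have hIcc : ∀ᵐ ω ∂P, X ω ∈ Set.Icc (-1 : ℝ) 1 := by
    filter_upwards [h.ae_eq_one_or_neg_one hX] with ω hω
    rcases hω with hω | hω <;> simp [hω]
  have hmean : P[X] = 0 := by simpa using h.integral_comp hX id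
  have hb := ((hasSubgaussianMGF_of_mem_Icc_of_integral_eq_zero hX.aemeasurable hIcc
    hmean).const_mul b).congr (ae_of_all _ fun ω ↦ mul_comm b (X ω))
  have hc : (⟨b ^ 2, sq_nonneg b⟩ * (‖(1 : ℝ) - -1‖₊ / 2) ^ 2 : NNReal) = ‖b‖₊ ^ 2 := by
    ext; norm_num; exact mul_one _
  rwa [hc] at hb

end IsRademacher

end Rademacher

section IntegerValued

variable {Ω : Type*} [MeasurableSpace Ω] {P : Measure Ω} {W : Ω → ℤ} {s : Finset ℤ}

theorem sum_measureReal_eq_one_of_ae_mem [IsProbabilityMeasure P] (hW : Measurable W)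
    (h : ∀ᵐ ω ∂P, W ω ∈ s) :
    ∑ z ∈ s, P.real {ω | W ω = z} = 1 := by
  have hs : P (W ⁻¹' s) = 1 := (prob_compl_eq_zero_iff (hW s.measurableSet)).mp h
  refine (sum_measureReal_preimage_singleton s fun z _ ↦ hW (measurableSet_singleton z)).trans ?_
  rw [measureReal_def, hs, ENNReal.toReal_one]

theorem measureReal_eq_zero_of_ae_mem (h : ∀ᵐ ω ∂P, W ω ∈ s) {z : ℤ} (hz : z ∉ s) :
    P.real {ω | W ω = z} = 0 := by
  have h0 : P {ω | W ω = z} = 0 := measure_mono_null (fun ω (hω : W ω = z) hs ↦ hz (hω ▸ hs)) h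
  rw [measureReal_def, h0, ENNReal.toReal_zero]

theorem sum_mul_measureReal_le_integral [IsFiniteMeasure P] (hW : Measurable W) {g : ℤ → ℝ}
    {Y : Ω → ℝ} (hY : Integrable Y P) (hY0 : 0 ≤ Y) (hgY : ∀ ω, g (W ω) ≤ Y ω) (s : Finset ℤ) :
    ∑ z ∈ s, g z * P.real {ω | W ω = z} ≤ ∫ ω, Y ω ∂P := by
  have hm (z : ℤ) : MeasurableSet {ω | W ω = z} := hW (measurableSet_singleton z)
  have hint (z : ℤ) : Integrable ({ω | W ω = z}.indicator fun _ ↦ g z) P :=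
    (integrable_const _).indicator (hm z)
  calc ∑ z ∈ s, g z * P.real {ω | W ω = z}
      = ∫ ω, ∑ z ∈ s, {ω | W ω = z}.indicator (fun _ ↦ g z) ω ∂P := by
        rw [integral_finsetSum s fun z _ ↦ hint z]
        exact sum_congr rfl fun z _ ↦ by
          rw [integral_indicator_const _ (hm z), smul_eq_mul, mul_comm]
    _ ≤ ∫ ω, Y ω ∂P := by
        refine integral_mono (integrable_finsetSum s fun z _ ↦ hint z) hY fun ω ↦ ?_
        simp only [Set.indicator_apply, Set.mem_ofPred_eq, sum_ite_eq]
        split_ifs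
        · exact hgY ω
        · exact hY0 ω

end IntegerValued

section RademacherSum

variable {Ω ι : Type*} [MeasurableSpace Ω] {P : Measure Ω} [IsProbabilityMeasure P] [Fintype ι]
  {ε : ι → Ω → ℝ}

theorem ae_abs_sum_rademacher_le (hε : ∀ i, Measurable (ε i))
    (hrad : ∀ i, IsRademacher (ε i) P) (b : ι → ℝ) :
    ∀ᵐ ω ∂P, |∑ i, ε i ω * b i| ≤ ∑ i, |b i| := by
  filter_upwards [ae_all_iff.mpr fun i ↦ (hrad i).ae_eq_one_or_neg_one (hε i)] with ω hω
  refine (abs_sum_le_sum_abs _ _).trans_eq (sum_congr rfl fun i _ ↦ ?_)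
  rcases hω i with h | h <;> simp [h]

theorem integral_sum_rademacher_sq (hε : ∀ i, Measurable (ε i)) (hind : iIndepFun ε P)
    (hrad : ∀ i, IsRademacher (ε i) P) (b : ι → ℝ) :
    ∫ ω, (∑ i, ε i ω * b i) ^ 2 ∂P = ∑ i, b i ^ 2 := by
  set Y : ι → Ω → ℝ := fun i ω ↦ ε i ω * b i
  have hY (i : ι) : Measurable (Y i) := (hε i).mul_const _
  have hmean (i : ι) : P[Y i] = 0 := by
    simpa using (hrad i).integral_comp (hε i) (· * b i)
  have hvar (i : ι) : Var[Y i; P] = b i ^ 2 := by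
    rw [variance_of_integral_eq_zero (hY i).aemeasurable (hmean i)]
    exact ((hrad i).integral_comp (hε i) fun x ↦ (x * b i) ^ 2).trans (by ring)
  have hL2 (i : ι) : MemLp (Y i) 2 P := by
    refine MemLp.of_bound (hY i).aestronglyMeasurable |b i| ?_
    filter_upwards [(hrad i).ae_eq_one_or_neg_one (hε i)] with ω h
    rcases h with h | h <;> simp [Y, h]
  have hsum_mean : ∫ ω, ∑ i, Y i ω ∂P = 0 := by
    rw [integral_finsetSum _ fun i _ ↦ (hL2 i).integrable one_le_two]
    exact sum_eq_zero fun i _ ↦ hmean i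
  have hsum_var : Var[fun ω ↦ ∑ i, Y i ω; P] = ∑ i, b i ^ 2 := by
    have h := IndepFun.variance_sum (X := Y) (s := univ) (fun i _ ↦ hL2 i) fun i _ j _ hij ↦
      (hind.indepFun hij).comp (measurable_id.mul_const (b i)) (measurable_id.mul_const (b j))
    simp only [hvar] at h
    rw [← h]
    congr 1
    ext ω
    simp only [Finset.sum_apply]
  rwa [variance_of_integral_eq_zero (Finset.measurable_sum _ fun i _ ↦ hY i).aemeasurable
    hsum_mean] at hsum_var

theorem measureReal_le_sum_rademacher_le (hε : ∀ i, Measurable (ε i)) (hind : iIndepFun ε P)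
    (hrad : ∀ i, IsRademacher (ε i) P) (b : ι → ℝ) {u : ℝ} (hu : 0 ≤ u) :
    P.real {ω | u ≤ ∑ i, ε i ω * b i} ≤ exp (-u ^ 2 / (2 * ∑ i, b i ^ 2)) := by
  have hind' : iIndepFun (fun i ω ↦ ε i ω * b i) P :=
    hind.comp (fun i x ↦ x * b i) fun i ↦ measurable_id.mul_const _
  have h := HasSubgaussianMGF.measure_sum_ge_le_of_iIndepFun (s := univ) hind'
    (fun i _ ↦ (hrad i).hasSubgaussianMGF_mul_const (hε i) (b i)) hu
  simpa using h

theorem measureReal_intPart_sum_rademacher_eq_le (hε : ∀ i, Measurable (ε i))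
    (hind : iIndepFun ε P) (hrad : ∀ i, IsRademacher (ε i) P) (b : ι → ℝ) {z : ℤ} (hz : z ≠ 0) :
    P.real {ω | intPart (∑ i, ε i ω * b i) = z} ≤ exp (-z ^ 2 / (2 * ∑ i, b i ^ 2)) := by
  have hpos (b : ι → ℝ) {z : ℤ} (hz : 0 < z) :
      P.real {ω | intPart (∑ i, ε i ω * b i) = z} ≤ exp (-z ^ 2 / (2 * ∑ i, b i ^ 2)) :=
    (measureReal_mono fun ω ↦ le_of_intPart_eq hz).trans
      (measureReal_le_sum_rademacher_le hε hind hrad b (by positivity))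
  rcases hz.lt_or_gt with hz | hz
  · have hneg (ω : Ω) : intPart (∑ i, ε i ω * -b i) = -intPart (∑ i, ε i ω * b i) := by
      simp [← intPart_neg]
    have h := hpos (fun i ↦ -b i) (neg_pos.mpr hz)
    simp only [hneg, neg_inj, neg_sq, Int.cast_neg] at h
    exact h
  · exact hpos b hz


theorem ae_intPart_sum_rademacher_mem_Icc (hε : ∀ i, Measurable (ε i))
    (hrad : ∀ i, IsRademacher (ε i) P) (b : ι → ℝ) :
    ∀ᵐ ω ∂P, intPart (∑ i, ε i ω * b i) ∈ Icc (-⌈∑ i, |b i|⌉) ⌈∑ i, |b i|⌉ := by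
  filter_upwards [ae_abs_sum_rademacher_le hε hrad b] with ω hω
  rw [mem_Icc, ← abs_le, ← Int.cast_le (R := ℝ), Int.cast_abs]
  exact (abs_intPart_le _).trans (hω.trans (Int.le_ceil _))

theorem sum_negMulLog_intPart_sum_rademacher_le (hε : ∀ i, Measurable (ε i))
    (hind : iIndepFun ε P) (hrad : ∀ i, IsRademacher (ε i) P) {b : ι → ℝ} (hb : b ≠ 0)
    {s : Finset ℤ} (hs : ∀ᵐ ω ∂P, intPart (∑ i, ε i ω * b i) ∈ s) :
    ∑ z ∈ s, negMulLog (P.real {ω | intPart (∑ i, ε i ω * b i) = z}) ≤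
      3 * Phi (1 / (2 * ∑ i, b i ^ 2)) := by
  have hσ2 : 0 < ∑ i, b i ^ 2 := by
    obtain ⟨i, hi⟩ := Function.ne_iff.mp hb
    exact sum_pos' (fun j _ ↦ sq_nonneg _) ⟨i, mem_univ i, sq_pos_of_ne_zero hi⟩
  have hZ : Measurable fun ω ↦ ∑ i, ε i ω * b i :=
    Finset.measurable_sum _ fun i _ ↦ (hε i).mul_const _
  have hW : Measurable fun ω ↦ intPart (∑ i, ε i ω * b i) := measurable_intPart.comp hZ
  have hZ2 : Integrable (fun ω ↦ (∑ i, ε i ω * b i) ^ 2) P :=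
    (MemLp.of_bound hZ.aestronglyMeasurable _ (ae_abs_sum_rademacher_le hε hrad b)).integrable_sq
  have hmoment : ∑ z ∈ s, (z : ℝ) ^ 2 * P.real {ω | intPart (∑ i, ε i ω * b i) = z}
      ≤ ∑ i, b i ^ 2 := by
    rw [← integral_sum_rademacher_sq hε hind hrad b]
    exact sum_mul_measureReal_le_integral hW hZ2 (fun ω ↦ sq_nonneg _)
      (fun ω ↦ sq_le_sq.mpr (abs_intPart_le _)) s
  refine sum_negMulLog_le_Phi (fun z ↦ measureReal_nonneg)
    (sum_measureReal_eq_one_of_ae_mem hW hs) (by positivity)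
    (hmoment.trans_eq (by field_simp)) fun z hz ↦ ?_
  exact (measureReal_intPart_sum_rademacher_eq_le hε hind hrad b hz).trans_eq (by congr 1; ring)

end RademacherSum

/-- There is an absolute constant `c > 0` such that for `Z = ∑ εᵢ aᵢ` a Rademacher sum and
`W = sgn(Z)⌊|Z|⌋`, the Shannon entropy of `W` is at most `c · Φ(1/(2|a|²))`. -/
theorem stmt4 : ∃ c > 0, ∀ (Ω : Type) (_ : MeasurableSpace Ω) (P : Measure Ω),
    IsProbabilityMeasure P → ∀ (n : ℕ) (a : Fin n → ℝ), a ≠ 0 →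
    ∀ ε : Fin n → Ω → ℝ, (∀ i, Measurable (ε i)) →
    iIndepFun ε P →
    (∀ i, P {ω | ε i ω = 1} = 1/2 ∧ P {ω | ε i ω = -1} = 1/2) →
    ∀ W : Ω → ℤ,
    (W = fun ω => (if 0 ≤ ∑ i, ε i ω * a i then 1 else -1) * ⌊|∑ i, ε i ω * a i|⌋) →
    -∑' z : ℤ, (P {ω | W ω = z}).toReal * Real.logb 2 (P {ω | W ω = z}).toReal ≤
      c * Phi (1 / (2 * ∑ i, a i ^ 2)) := by
  refine ⟨6, by norm_num, ?_⟩
  intro Ω _ P _ n a ha ε hε hind hrad W hW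
  obtain rfl : W = fun ω ↦ intPart (∑ i, ε i ω * a i) := hW
  have hmem := ae_intPart_sum_rademacher_mem_Icc hε hrad a
  refine (neg_tsum_mul_logb_le_two_mul_sum_negMulLog
    (fun z hz ↦ measureReal_eq_zero_of_ae_mem hmem hz) (fun _ ↦ measureReal_nonneg)
    (fun _ ↦ measureReal_le_one)).trans ?_
  linarith [sum_negMulLog_intPart_sum_rademacher_le hε hind hrad ha hmem]
end

section
/- Let (g_i)_{i=1}^n be independent standard Gaussian random variables and let (g_i*)_{i=1}^n be the nonincreasing rearrangement of (|g_i|)_{i=1}^n. Then there are absolute constants c, C > 0 such that for every 1 ≤ m ≤ n: c·√(m·log(en/m)) ≤ (E ∑_{i=1}^m (g_i*)²)^{1/2} ≤ C·√(m·log(en/m)). -/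
/-!
Write `F` for the sum of the `m` largest `gᵢ²` and `L = log (e n / m)`.

Upper bound: truncating at a level `s` gives `F ≤ m s + ∑ᵢ (gᵢ² - s)⁺`, and comparing with
`exp (g² / 4)`, whose Gaussian mean is `√2`, gives `E (g² - s)⁺ ≤ 6 e^{-s/4}`. The choice
`s = 4 L` makes the second term `6 m / e`, so `E F ≤ 9 m L`.

Lower bound: split the coordinates into `m` disjoint blocks of size `k = ⌊n / m⌋`. `F` dominates
the sum of the block maxima of `gᵢ²`, and since `P (g² ≥ T) ≥ e^{-T-1} / 3`, the maximum of `k`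
independent `gᵢ²` exceeds `1 + log k` with probability at least `1 / 45`. By Markov's inequality
each block maximum has mean at least `(1 + log k) / 45 ≥ L / 150`, so `E F ≥ m L / 150`.
-/

open MeasureTheory ProbabilityTheory Real Finset Function
open scoped NNReal

noncomputable section

namespace GaussianLargestSquares

def sumLargest {ι : Type*} [Fintype ι] (m : ℕ) (x : ι → ℝ) : ℝ :=
  ⨆ I : {I : Finset ι // I.card = m}, ∑ i ∈ I.1, x i

section SumLargest

variable {ι : Type*} [Fintype ι] {m : ℕ} {x : ι → ℝ}

lemma sum_le_sumLargest {I : Finset ι} (hI : I.card = m) : ∑ i ∈ I, x i ≤ sumLargest m x :=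
  le_ciSup (f := fun I : {I : Finset ι // I.card = m} => ∑ i ∈ I.1, x i)
    (Set.finite_range _).bddAbove ⟨I, hI⟩

lemma sumLargest_le {a : ℝ} (hm : m ≤ Fintype.card ι)
    (h : ∀ I : Finset ι, I.card = m → ∑ i ∈ I, x i ≤ a) : sumLargest m x ≤ a := by
  obtain ⟨I, -, hI⟩ := exists_subset_card_eq (s := (univ : Finset ι)) (by simpa using hm)
  have : Nonempty {I : Finset ι // I.card = m} := ⟨⟨I, hI⟩⟩
  exact ciSup_le fun I => h I.1 I.2

lemma sumLargest_nonneg (hx : 0 ≤ x) : 0 ≤ sumLargest m x :=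
  Real.iSup_nonneg fun _ => sum_nonneg fun i _ => hx i

lemma sumLargest_le_sum (hx : 0 ≤ x) : sumLargest m x ≤ ∑ i, x i :=
  Real.iSup_le (fun _ => sum_le_sum_of_subset_of_nonneg (subset_univ _) fun i _ _ => hx i)
    (sum_nonneg fun i _ => hx i)

lemma sumLargest_le_mul_add_sum_max (hm : m ≤ Fintype.card ι) (s : ℝ) :
    sumLargest m x ≤ m * s + ∑ i, max (x i - s) 0 :=
  sumLargest_le hm fun I hI => calc
    ∑ i ∈ I, x i ≤ ∑ i ∈ I, (s + max (x i - s) 0) :=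
      sum_le_sum fun i _ => by linarith [le_max_left (x i - s) 0]
    _ = m * s + ∑ i ∈ I, max (x i - s) 0 := by
      rw [sum_add_distrib, sum_const, hI, nsmul_eq_mul]
    _ ≤ m * s + ∑ i, max (x i - s) 0 := add_le_add_right
      (sum_le_sum_of_subset_of_nonneg (subset_univ I) fun i _ _ => le_max_right (x i - s) 0) _

lemma sum_sup'_le_sumLargest {G : Fin m → Finset ι} (hG : Pairwise (Disjoint on G))
    (hne : ∀ j, (G j).Nonempty) : ∑ j, (G j).sup' (hne j) x ≤ sumLargest m x := by
  choose a ha hax using fun j => exists_mem_eq_sup' (hne j) x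
  have ha_inj : Function.Injective a := fun j j' h => by
    by_contra hjj'
    exact disjoint_left.1 (hG hjj') (ha j) (h ▸ ha j')
  calc ∑ j, (G j).sup' (hne j) x = ∑ i ∈ univ.map ⟨a, ha_inj⟩, x i := by
        rw [sum_map]
        exact sum_congr rfl fun j _ => hax j
    _ ≤ sumLargest m x := sum_le_sumLargest (by simp)

lemma exists_pairwise_disjoint_card_eq {k : ℕ} (h : m * k ≤ Fintype.card ι) :
    ∃ G : Fin m → Finset ι, Pairwise (Disjoint on G) ∧ ∀ j, (G j).card = k := by
  obtain ⟨e⟩ := Function.Embedding.nonempty_of_card_le (α := Fin m × Fin k) (β := ι)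
    (by simpa using h)
  refine ⟨fun j => univ.map ⟨fun i => e (j, i), fun i i' h => by simpa using e.injective h⟩,
    fun j j' hjj' => disjoint_left.2 ?_, fun j => by simp⟩
  simp only [mem_map, mem_univ, true_and]
  rintro _ ⟨i, rfl⟩ ⟨i', h⟩
  exact hjj' (Prod.ext_iff.1 (e.injective h)).1.symm

lemma measurable_sumLargest {Ω : Type*} [MeasurableSpace Ω] {f : ι → Ω → ℝ}
    (hf : ∀ i, Measurable (f i)) : Measurable fun ω => sumLargest m fun i => f i ω :=
  Measurable.iSup fun _ => Finset.measurable_sum _ fun i _ => hf i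

end SumLargest

lemma integrable_gaussianReal_iff {μ : ℝ} {v : ℝ≥0} (hv : v ≠ 0) {f : ℝ → ℝ} :
    Integrable f (gaussianReal μ v) ↔ Integrable (fun x => gaussianPDFReal μ v x * f x) := by
  rw [gaussianReal_of_var_ne_zero _ hv, integrable_withDensity_iff_integrable_smul'
    (measurable_gaussianPDF μ v) (ae_of_all _ fun _ => gaussianPDF_lt_top)]
  simp [gaussianPDF, gaussianPDFReal_nonneg]

lemma gaussianPDFReal_zero_one_mul_exp_sq_div_four (x : ℝ) :
    gaussianPDFReal 0 1 x * exp (x ^ 2 / 4) = (√(2 * π))⁻¹ * exp (-(1 / 4) * x ^ 2) := by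
  simp only [gaussianPDFReal, NNReal.coe_one, mul_one, sub_zero, mul_assoc, ← exp_add]
  ring_nf

lemma integrable_exp_sq_div_four_gaussianReal :
    Integrable (fun x => exp (x ^ 2 / 4)) (gaussianReal 0 1) := by
  rw [integrable_gaussianReal_iff one_ne_zero]
  simp_rw [gaussianPDFReal_zero_one_mul_exp_sq_div_four]
  exact (integrable_exp_neg_mul_sq (by norm_num)).const_mul _

lemma integral_exp_sq_div_four_gaussianReal :
    ∫ x, exp (x ^ 2 / 4) ∂(gaussianReal 0 1) = √2 := by
  rw [integral_gaussianReal_eq_integral_smul one_ne_zero]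
  simp_rw [smul_eq_mul, gaussianPDFReal_zero_one_mul_exp_sq_div_four]
  rw [integral_const_mul, integral_gaussian, ← sqrt_inv, ← sqrt_mul (by positivity)]
  congr 1
  field_simp
  norm_num

/-- `y ≤ 4 e^{y/4}` applied to `y = x² - s`. -/
lemma max_sq_sub_le (s x : ℝ) : max (x ^ 2 - s) 0 ≤ 4 * exp (-s / 4) * exp (x ^ 2 / 4) := by
  have key : x ^ 2 - s ≤ 4 * exp ((x ^ 2 - s) / 4) := by
    nlinarith [add_one_le_exp ((x ^ 2 - s) / 4), exp_pos ((x ^ 2 - s) / 4)]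
  rw [mul_assoc, ← exp_add, show -s / 4 + x ^ 2 / 4 = (x ^ 2 - s) / 4 by ring]
  exact max_le key (by positivity)

lemma integral_max_sq_sub_le (s : ℝ) :
    ∫ x, max (x ^ 2 - s) 0 ∂(gaussianReal 0 1) ≤ 6 * exp (-s / 4) := by
  have hdom := integrable_exp_sq_div_four_gaussianReal.const_mul (4 * exp (-s / 4))
  calc ∫ x, max (x ^ 2 - s) 0 ∂(gaussianReal 0 1)
      ≤ ∫ x, 4 * exp (-s / 4) * exp (x ^ 2 / 4) ∂(gaussianReal 0 1) :=
        integral_mono_of_nonneg (ae_of_all _ fun _ => le_max_right _ _) hdom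
          (ae_of_all _ (max_sq_sub_le s))
    _ = 4 * √2 * exp (-s / 4) := by
        rw [integral_const_mul, integral_exp_sq_div_four_gaussianReal]; ring
    _ ≤ 6 * exp (-s / 4) := by
        have : √2 ≤ 3 / 2 := sqrt_le_iff.2 ⟨by norm_num, by norm_num⟩
        gcongr
        linarith

/-- The density is at least `e^{-T-1} / 3` on `[√T, √T + 1]`. -/
lemma exp_neg_sub_one_div_three_le_gaussianReal_real {T : ℝ} (hT : 0 ≤ T) :
    exp (-T - 1) / 3 ≤ (gaussianReal 0 1).real {x | T ≤ x ^ 2} := by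
  set t := √T
  have hsub : Set.Icc t (t + 1) ⊆ {x | T ≤ x ^ 2} := fun x hx => by
    have : t ^ 2 ≤ x ^ 2 := pow_le_pow_left₀ (sqrt_nonneg T) hx.1 2
    rwa [sq_sqrt hT] at this
  have hpdf : ∀ x ∈ Set.Icc t (t + 1), exp (-T - 1) / 3 ≤ gaussianPDFReal 0 1 x := by
    intro x hx
    have hsqrt : √(2 * π) ≤ 3 := sqrt_le_iff.2 ⟨by norm_num, by nlinarith [pi_lt_four]⟩
    have hexp : exp (-T - 1) ≤ exp (-x ^ 2 / 2) := by
      apply exp_le_exp.2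
      nlinarith [sq_sqrt hT, hx.1, hx.2, sq_nonneg (t - 1), sqrt_nonneg T]
    rw [gaussianPDFReal]
    simp only [sub_zero, NNReal.coe_one, mul_one]
    rw [div_eq_inv_mul]
    gcongr
  calc exp (-T - 1) / 3 = ∫ _ in Set.Icc t (t + 1), exp (-T - 1) / 3 := by simp
    _ ≤ ∫ x in Set.Icc t (t + 1), gaussianPDFReal 0 1 x :=
        setIntegral_mono_on (integrable_const _)
          (integrable_gaussianPDFReal 0 1).integrableOn measurableSet_Icc hpdf
    _ = (gaussianReal 0 1).real (Set.Icc t (t + 1)) := by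
        rw [measureReal_def, gaussianReal_apply_eq_integral 0 one_ne_zero,
          ENNReal.toReal_ofReal (setIntegral_nonneg measurableSet_Icc
            fun x _ => gaussianPDFReal_nonneg 0 1 x)]
    _ ≤ (gaussianReal 0 1).real {x | T ≤ x ^ 2} := measureReal_mono hsub

lemma two_div_fifteen_le_exp_neg_two : 2 / 15 ≤ exp (-2) := by
  have : exp 2 ≤ 15 / 2 := by
    rw [show (2 : ℝ) = 1 + 1 by norm_num, exp_add]; nlinarith [exp_pos 1, exp_one_lt_d9]
  rw [exp_neg, le_inv_comm₀ (by norm_num) (exp_pos 2)]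
  linarith

lemma div_two_le_one_sub_exp_neg {y : ℝ} (h0 : 0 ≤ y) (h1 : y ≤ 1) : y / 2 ≤ 1 - exp (-y) := by
  have h : (1 + y) * exp (-y) ≤ 1 := by
    have := mul_le_mul_of_nonneg_right (add_one_le_exp y) (exp_pos (-y)).le
    rwa [← exp_add, add_neg_cancel, exp_zero, add_comm] at this
  nlinarith [exp_pos (-y)]

section Probability

variable {Ω ι : Type*} [MeasurableSpace Ω] {μ : Measure Ω}

lemma measure_biInter_preimage_eq_pow {β : Type*} [MeasurableSpace β] {g : ι → Ω → β}
    (hind : iIndepFun g μ) (hg : ∀ i, Measurable (g i)) {ν : Measure β}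
    (hmap : ∀ i, μ.map (g i) = ν) {B : Set β} (hB : MeasurableSet B) (S : Finset ι) :
    μ (⋂ i ∈ S, g i ⁻¹' B) = ν B ^ S.card := by
  rw [hind.meas_biInter fun i _ => ⟨B, hB, rfl⟩, ← prod_const]
  exact prod_congr rfl fun i _ => by rw [← Measure.map_apply (hg i) hB, hmap i]

variable {g : ι → Ω → ℝ}

lemma integrable_sq_of_map_eq_gaussianReal {X : Ω → ℝ} (hX : Measurable X)
    (hmap : μ.map X = gaussianReal 0 1) : Integrable (fun ω => X ω ^ 2) μ := by
  have := (memLp_id_gaussianReal (μ := 0) (v := 1) 2).integrable_sq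
  rw [← hmap] at this
  exact this.comp_measurable hX

lemma integrable_sup'_sq (hg : ∀ i, Measurable (g i))
    (hmap : ∀ i, μ.map (g i) = gaussianReal 0 1) {S : Finset ι} (hS : S.Nonempty) :
    Integrable (fun ω => S.sup' hS fun i => g i ω ^ 2) μ := by
  refine (integrable_finsetSum S fun i _ =>
    integrable_sq_of_map_eq_gaussianReal (hg i) (hmap i)).mono' ?_ (ae_of_all _ fun ω => ?_)
  · exact (measurable_sup' hS fun i _ => (hg i).pow_const 2).aestronglyMeasurable.congr
      (ae_of_all _ fun ω => Finset.sup'_apply hS _ ω)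
  · obtain ⟨i₀, hi₀⟩ := hS
    rw [norm_of_nonneg ((sq_nonneg (g i₀ ω)).trans (le_sup' (fun i => g i ω ^ 2) hi₀))]
    exact sup'_le _ _ fun i hi => single_le_sum (fun j _ => sq_nonneg (g j ω)) hi

lemma integrable_sumLargest_sq [Fintype ι] {m : ℕ} (hg : ∀ i, Measurable (g i))
    (hmap : ∀ i, μ.map (g i) = gaussianReal 0 1) :
    Integrable (fun ω => sumLargest m fun i => g i ω ^ 2) μ :=
  (integrable_finsetSum univ fun i _ =>
    integrable_sq_of_map_eq_gaussianReal (hg i) (hmap i)).mono'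
    (measurable_sumLargest fun i => (hg i).pow_const 2).aestronglyMeasurable
    (ae_of_all _ fun ω => by
      rw [norm_of_nonneg (sumLargest_nonneg fun i => sq_nonneg _)]
      exact sumLargest_le_sum fun i => sq_nonneg _)

variable [IsProbabilityMeasure μ]

/-- With `T = 1 + log k`, each `gᵢ² ≥ T` has probability at least `e⁻² / (3k)`, so all `k` of
them fail with probability at most `exp (-e⁻² / 3)`. -/
lemma one_div_45_le_measureReal_le_sup'_sq (hind : iIndepFun g μ) (hg : ∀ i, Measurable (g i))
    (hmap : ∀ i, μ.map (g i) = gaussianReal 0 1) {S : Finset ι} (hS : S.Nonempty) :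
    1 / 45 ≤ μ.real {ω | 1 + log S.card ≤ S.sup' hS fun i => g i ω ^ 2} := by
  set k : ℝ := (S.card : ℝ)
  set T := 1 + log k
  have hk : 1 ≤ k := Nat.one_le_cast.2 hS.card_pos
  have hT : 0 ≤ T := by have := log_nonneg hk; positivity
  have hB : MeasurableSet {x : ℝ | x ^ 2 < T} := measurableSet_lt (by fun_prop) measurable_const
  have hevent :
      {ω | T ≤ S.sup' hS fun i => g i ω ^ 2} = (⋂ i ∈ S, g i ⁻¹' {x | x ^ 2 < T})ᶜ := by
    ext ω; simp [le_sup'_iff]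
  have hq : (gaussianReal 0 1).real {x | x ^ 2 < T} ≤ 1 - (exp (-2) / 3) / k := by
    have htail := exp_neg_sub_one_div_three_le_gaussianReal_real hT
    have : exp (-T - 1) = exp (-2) / k := by
      rw [show -T - 1 = -2 - log k by ring, exp_sub, exp_log (by positivity)]
    have hc : {x : ℝ | x ^ 2 < T} = {x | T ≤ x ^ 2}ᶜ := by ext; simp
    rw [hc, probReal_compl_eq_one_sub (measurableSet_le measurable_const (by fun_prop))]
    rw [this, div_right_comm] at htail
    linarith
  have hy : exp (-2) / 3 ≤ 1 := by have := exp_le_one_iff.2 (by norm_num : (-2 : ℝ) ≤ 0); linarith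
  have hpow : (gaussianReal 0 1).real {x | x ^ 2 < T} ^ S.card ≤ exp (-(exp (-2) / 3)) :=
    calc _ ≤ (1 - (exp (-2) / 3) / k) ^ S.card := pow_le_pow_left₀ measureReal_nonneg hq _
      _ ≤ exp (-(exp (-2) / 3)) := one_sub_div_pow_le_exp_neg (hy.trans hk)
  have hexp := two_div_fifteen_le_exp_neg_two
  rw [hevent, probReal_compl_eq_one_sub (Finset.measurableSet_biInter S fun i _ => hg i hB),
    measureReal_def, measure_biInter_preimage_eq_pow hind hg hmap hB, ENNReal.toReal_pow,
    ← measureReal_def]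
  linarith [div_two_le_one_sub_exp_neg (by positivity) hy]

lemma one_add_log_card_div_le_integral_sup'_sq (hind : iIndepFun g μ) (hg : ∀ i, Measurable (g i))
    (hmap : ∀ i, μ.map (g i) = gaussianReal 0 1) {S : Finset ι} (hS : S.Nonempty) :
    (1 + log S.card) / 45 ≤ ∫ ω, S.sup' hS (fun i => g i ω ^ 2) ∂μ := by
  have ⟨i₀, hi₀⟩ := hS
  have hT : 0 ≤ 1 + log S.card := by
    have := log_nonneg (Nat.one_le_cast.2 hS.card_pos : (1 : ℝ) ≤ S.card); positivity
  calc (1 + log S.card) / 45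
      ≤ (1 + log S.card) * μ.real {ω | 1 + log S.card ≤ S.sup' hS fun i => g i ω ^ 2} := by
        rw [div_eq_mul_one_div]
        exact mul_le_mul_of_nonneg_left
          (one_div_45_le_measureReal_le_sup'_sq hind hg hmap hS) hT
    _ ≤ _ := mul_meas_ge_le_integral_of_nonneg
        (ae_of_all _ fun ω => le_sup'_of_le _ hi₀ (sq_nonneg (g i₀ ω)))
        (integrable_sup'_sq hg hmap hS) _

variable [Fintype ι] {m : ℕ}

lemma integral_sumLargest_sq_le (hg : ∀ i, Measurable (g i))
    (hmap : ∀ i, μ.map (g i) = gaussianReal 0 1) (hm : m ≤ Fintype.card ι) (s : ℝ) :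
    ∫ ω, sumLargest m (fun i => g i ω ^ 2) ∂μ ≤ m * s + Fintype.card ι * (6 * exp (-s / 4)) := by
  have hint : ∀ i, Integrable (fun ω => max (g i ω ^ 2 - s) 0) μ := fun i =>
    ((integrable_sq_of_map_eq_gaussianReal (hg i) (hmap i)).sub (integrable_const s)).pos_part
  calc ∫ ω, sumLargest m (fun i => g i ω ^ 2) ∂μ
      ≤ ∫ ω, (m * s + ∑ i, max (g i ω ^ 2 - s) 0) ∂μ :=
        integral_mono (integrable_sumLargest_sq hg hmap)
          ((integrable_const _).add (integrable_finsetSum _ fun i _ => hint i))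
          fun ω => sumLargest_le_mul_add_sum_max hm s
    _ = m * s + ∑ i, ∫ ω, max (g i ω ^ 2 - s) 0 ∂μ := by
        rw [integral_add (integrable_const _) (integrable_finsetSum _ fun i _ => hint i),
          integral_finsetSum _ fun i _ => hint i, integral_const, probReal_univ, one_smul]
    _ ≤ m * s + ∑ _i : ι, 6 * exp (-s / 4) := by
        gcongr with i
        rw [← integral_map (f := fun x => max (x ^ 2 - s) 0) (hg i).aemeasurable (by fun_prop),
          hmap i]
        exact integral_max_sq_sub_le s
    _ = m * s + Fintype.card ι * (6 * exp (-s / 4)) := by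
        rw [sum_const, card_univ, nsmul_eq_mul]

lemma mul_one_add_log_div_le_integral_sumLargest_sq (hind : iIndepFun g μ) (hg : ∀ i, Measurable (g i))
    (hmap : ∀ i, μ.map (g i) = gaussianReal 0 1) {k : ℕ} (hk : 1 ≤ k)
    (hmk : m * k ≤ Fintype.card ι) :
    m * ((1 + log k) / 45) ≤ ∫ ω, sumLargest m (fun i => g i ω ^ 2) ∂μ := by
  obtain ⟨G, hG, hcard⟩ := exists_pairwise_disjoint_card_eq hmk
  have hne : ∀ j, (G j).Nonempty := fun j => card_pos.1 (by rw [hcard]; omega)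
  have hint : ∀ j, Integrable (fun ω => (G j).sup' (hne j) fun i => g i ω ^ 2) μ :=
    fun j => integrable_sup'_sq hg hmap (hne j)
  calc m * ((1 + log k) / 45) = ∑ j, (1 + log (G j).card) / 45 := by simp [hcard]
    _ ≤ ∑ j, ∫ ω, (G j).sup' (hne j) (fun i => g i ω ^ 2) ∂μ :=
        sum_le_sum fun j _ => one_add_log_card_div_le_integral_sup'_sq hind hg hmap (hne j)
    _ = ∫ ω, ∑ j, (G j).sup' (hne j) (fun i => g i ω ^ 2) ∂μ :=
        (integral_finsetSum _ fun j _ => hint j).symm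
    _ ≤ _ := integral_mono (integrable_finsetSum _ fun j _ => hint j)
        (integrable_sumLargest_sq hg hmap) fun ω => sum_sup'_le_sumLargest hG hne

end Probability

lemma log_exp_one_mul_div {m n : ℕ} (hm : 1 ≤ m) (hn : 1 ≤ n) :
    log (exp 1 * n / m) = 1 + log (n / m) := by
  have hm' : (0 : ℝ) < m := by exact_mod_cast hm
  have hn' : (0 : ℝ) < n := by exact_mod_cast hn
  rw [mul_div_assoc, log_mul (exp_ne_zero 1) (by positivity), log_exp]

lemma log_div_nonneg {m n : ℕ} (hm : 1 ≤ m) (hmn : m ≤ n) : 0 ≤ log (n / m) :=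
  log_nonneg ((one_le_div (by exact_mod_cast hm)).2 (by exact_mod_cast hmn))

lemma one_le_log_exp_one_mul_div {m n : ℕ} (hm : 1 ≤ m) (hmn : m ≤ n) :
    1 ≤ log (exp 1 * n / m) := by
  rw [log_exp_one_mul_div hm (hm.trans hmn)]
  linarith [log_div_nonneg hm hmn]

/-- With `k = ⌊n / m⌋ ≥ n / (2m)`, the loss of `log 2` is absorbed since `1 - log 2 > 3 / 10`. -/
lemma mul_log_exp_one_mul_div_le {m n : ℕ} (hm : 1 ≤ m) (hmn : m ≤ n) :
    3 / 10 * log (exp 1 * n / m) ≤ 1 + log (n / m : ℕ) := by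
  rw [log_exp_one_mul_div hm (hm.trans hmn)]
  have hlog := log_div_nonneg hm hmn
  have hm' : (0 : ℝ) < m := by exact_mod_cast hm
  have hn : (0 : ℝ) < n := by exact_mod_cast hm.trans hmn
  have hk : 1 ≤ n / m := (Nat.one_le_div_iff hm).2 hmn
  have hk' : (n : ℝ) / m / 2 ≤ (n / m : ℕ) := by
    have : n < (n / m + 1) * m := by rw [add_one_mul]; exact Nat.lt_div_mul_add hm
    have : (n : ℝ) < ((n / m : ℕ) + 1) * m := by exact_mod_cast this
    have : (1 : ℝ) ≤ (n / m : ℕ) := by exact_mod_cast hk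
    rw [div_div, div_le_iff₀ (by positivity)]
    nlinarith
  have hlogk : log (n / m) - log 2 ≤ log (n / m : ℕ) := by
    rw [← log_div (by positivity) two_ne_zero]
    exact log_le_log (by positivity) hk'
  linarith [log_two_lt_d9]

section Bounds

variable {Ω ι : Type*} [MeasurableSpace Ω] {μ : Measure Ω} [IsProbabilityMeasure μ] [Fintype ι]
  {g : ι → Ω → ℝ} {m : ℕ}

lemma integral_sumLargest_sq_le_mul_log (hg : ∀ i, Measurable (g i))
    (hmap : ∀ i, μ.map (g i) = gaussianReal 0 1) (hm : 1 ≤ m) (hmn : m ≤ Fintype.card ι) :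
    ∫ ω, sumLargest m (fun i => g i ω ^ 2) ∂μ ≤ 3 ^ 2 * (m * log (exp 1 * Fintype.card ι / m)) := by
  set n := Fintype.card ι
  set L := log (exp 1 * n / m)
  have hL : 1 ≤ L := one_le_log_exp_one_mul_div hm hmn
  have hm' : (0 : ℝ) < m := by exact_mod_cast hm
  have hn : (0 : ℝ) < n := by exact_mod_cast hm.trans hmn
  -- Truncating at `s = 4 L` makes the tail term `n e^{-L} = m / e`.
  have htail : n * exp (-(4 * L) / 4) = m / exp 1 := by
    rw [show -(4 * L) / 4 = -L by ring, exp_neg, exp_log (by positivity)]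
    field_simp
  have he : m / exp 1 ≤ m / 2 :=
    div_le_div_of_nonneg_left hm'.le two_pos (by linarith [add_one_le_exp (1 : ℝ)])
  calc _ ≤ m * (4 * L) + n * (6 * exp (-(4 * L) / 4)) :=
        integral_sumLargest_sq_le hg hmap hmn (4 * L)
    _ ≤ 3 ^ 2 * (m * L) := by nlinarith

lemma mul_log_div_le_integral_sumLargest_sq (hind : iIndepFun g μ) (hg : ∀ i, Measurable (g i))
    (hmap : ∀ i, μ.map (g i) = gaussianReal 0 1) (hm : 1 ≤ m) (hmn : m ≤ Fintype.card ι) :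
    (1 / 13) ^ 2 * (m * log (exp 1 * Fintype.card ι / m)) ≤
      ∫ ω, sumLargest m (fun i => g i ω ^ 2) ∂μ := by
  set n := Fintype.card ι
  have hL := one_le_log_exp_one_mul_div hm hmn
  have hlog := mul_log_exp_one_mul_div_le hm hmn
  have hm' : (0 : ℝ) ≤ m := m.cast_nonneg
  calc _ = (m : ℝ) * ((1 / 13) ^ 2 * log (exp 1 * n / m)) := by ring
    _ ≤ (m : ℝ) * ((1 + log (n / m : ℕ)) / 45) := by
        gcongr
        linarith
    _ ≤ _ := mul_one_add_log_div_le_integral_sumLargest_sq hind hg hmap ((Nat.one_le_div_iff hm).2 hmn)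
        (Nat.mul_div_le n m)

end Bounds

end GaussianLargestSquares

end

open GaussianLargestSquares in
/-- For i.i.d. standard Gaussians `g₁,...,g_n` and `1 ≤ m ≤ n`, the nonincreasing
rearrangement `(gᵢ*)` of `(|gᵢ|)` satisfies
`c √(m log(en/m)) ≤ (E ∑_{i ≤ m} (gᵢ*)²)^{1/2} ≤ C √(m log(en/m))`, where the sum of the
`m` largest squares is expressed as the supremum of `∑_{i ∈ I} gᵢ²` over `|I| = m`. -/
theorem stmt14 : ∃ c > 0, ∃ C > 0, ∀ (Ω : Type) (_ : MeasurableSpace Ω) (μ : Measure Ω),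
    IsProbabilityMeasure μ → ∀ (n : ℕ) (g : Fin n → Ω → ℝ), (∀ i, Measurable (g i)) →
    iIndepFun g μ →
    (∀ i, μ.map (g i) = gaussianReal 0 1) →
    ∀ m : ℕ, 1 ≤ m → m ≤ n →
      c * Real.sqrt (m * Real.log (Real.exp 1 * n / m)) ≤
        Real.sqrt (∫ ω, (⨆ I : {I : Finset (Fin n) // I.card = m}, ∑ i ∈ I.1, g i ω ^ 2) ∂μ) ∧
      Real.sqrt (∫ ω, (⨆ I : {I : Finset (Fin n) // I.card = m}, ∑ i ∈ I.1, g i ω ^ 2) ∂μ) ≤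
        C * Real.sqrt (m * Real.log (Real.exp 1 * n / m)) := by
  refine ⟨1 / 13, by norm_num, 3, by norm_num, fun Ω _ μ _ n g hg hind hmap m hm hmn => ?_⟩
  have hmn' : m ≤ Fintype.card (Fin n) := by rwa [Fintype.card_fin]
  have hlower := mul_log_div_le_integral_sumLargest_sq hind hg hmap hm hmn'
  have hupper := integral_sumLargest_sq_le_mul_log hg hmap hm hmn'
  rw [Fintype.card_fin] at hlower hupper
  unfold sumLargest at hlower hupper
  rw [← sqrt_sq (by norm_num : (0 : ℝ) ≤ 1 / 13), ← sqrt_sq (by norm_num : (0 : ℝ) ≤ 3),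
    ← sqrt_mul (by positivity), ← sqrt_mul (by positivity)]
  exact ⟨sqrt_le_sqrt hlower, sqrt_le_sqrt hupper⟩
end

section
/- Let W_m = {x ∈ ℝ^m : x_j* ≤ 1/√j for j = 1,...,m} be the unit ball of weak ℓ₂, where (x_j*) is the nonincreasing rearrangement of (|x_j|). Then E sup_{w ∈ W_m} ∑_{i=1}^m g_i w_i = E ∑_{i=1}^m g_i*/√i ≤ C√m for an absolute constant C, where (g_i) are i.i.d. standard Gaussians. -/
open MeasureTheory ProbabilityTheory

/-- The unit ball `W_m` of weak `ℓ₂`: vectors whose nonincreasing rearrangement satisfies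
`x_j* ≤ 1/√j`, characterized by `#{i : |x_i| > 1/√j} < j` for every `j ≥ 1`. -/
def weakL2Ball (m : ℕ) : Set (Fin m → ℝ) :=
  {x | ∀ j : ℕ, 1 ≤ j →
    (Finset.univ.filter fun i => 1 / Real.sqrt j < |x i|).card < j}

/-!
Pairing `a` with `w ∈ W_m` is maximized by putting the weight `1/√(k+1)` on the `k`-th largest
`|a_i|` with the sign of `a_i`, so `sup_{w ∈ W_m} ⟪a, w⟫ = ∑ a*_k/√k`. For the bound, Young's
inequality with exponents `4` and `4/3` gives, for every `t > 0`,
`∑ a*_k/√k ≤ ∑ a_i⁴/(4t³) + (3t/4) ∑ k^(-2/3) ≤ ∑ a_i⁴/(4t³) + (9t/4) m^(1/3)`.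
Taking expectations, `E g_i⁴ < ∞` and `t = m^(1/6)` give `E ∑ g*_k/√k ≤ (E g⁴ + 9)/4 · √m`.
-/

open Finset

lemma one_div_sqrt_lt_one_div_sqrt_iff {a b : ℝ} (ha : 0 < a) (hb : 0 < b) :
    1 / √a < 1 / √b ↔ b < a := by
  rw [one_div_lt_one_div (Real.sqrt_pos.2 ha) (Real.sqrt_pos.2 hb), Real.sqrt_lt_sqrt_iff hb.le]

namespace WeakL2Ball

variable {m : ℕ}

lemma mem_of_abs_le {w : Fin m → ℝ} (σ : Equiv.Perm (Fin m))
    (hw : ∀ k, |w (σ k)| ≤ 1 / √((k : ℕ) + 1)) : w ∈ weakL2Ball m := by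
  intro j hj
  calc #{i | 1 / √j < |w i|} ≤ #(range (j - 1)) := by
        refine card_le_card_of_injOn (fun i => (σ.symm i : ℕ)) (fun i hi => ?_)
          (fun i _ i' _ h => σ.symm.injective (Fin.ext h))
        have hle := hw (σ.symm i)
        rw [σ.apply_symm_apply] at hle
        have hlt := (mem_filter.1 hi).2.trans_le hle
        rw [one_div_sqrt_lt_one_div_sqrt_iff (by positivity) (by positivity)] at hlt
        have : (σ.symm i : ℕ) + 1 < j := by exact_mod_cast hlt
        simp only [coe_range, Set.mem_Iio]
        omega
    _ < j := by rw [card_range]; omega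

lemma abs_apply_le_of_antitone {w : Fin m → ℝ} (hw : w ∈ weakL2Ball m)
    {σ : Equiv.Perm (Fin m)} (hσ : Antitone fun k => |w (σ k)|) (k : Fin m) :
    |w (σ k)| ≤ 1 / √((k : ℕ) + 1) := by
  by_contra! h
  have hsub : (Iic k).image σ ⊆ univ.filter fun i => 1 / √(((k : ℕ) + 1 : ℕ) : ℝ) < |w i| := by
    intro i hi
    obtain ⟨l, hl, rfl⟩ := mem_image.1 hi
    simpa using h.trans_le (hσ (mem_Iic.1 hl))
  have hcard := (card_le_card hsub).trans_lt (hw ((k : ℕ) + 1) (by omega))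
  rw [card_image_of_injective _ σ.injective, Fin.card_Iic] at hcard
  exact hcard.false

end WeakL2Ball

variable {m : ℕ}

/-- `∑ a*_i / √i`, with `a*` the nonincreasing rearrangement of `|a|`. -/
noncomputable def sortedWeightedSum (a : Fin m → ℝ) : ℝ :=
  ⨆ σ : Equiv.Perm (Fin m), ∑ i : Fin m, |a (σ i)| / √((i : ℕ) + 1)

lemma le_sortedWeightedSum (a : Fin m → ℝ) (σ : Equiv.Perm (Fin m)) :
    ∑ i : Fin m, |a (σ i)| / √((i : ℕ) + 1) ≤ sortedWeightedSum a :=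
  le_ciSup (f := fun σ : Equiv.Perm (Fin m) => ∑ i : Fin m, |a (σ i)| / √((i : ℕ) + 1))
    (Set.finite_range _).bddAbove σ

lemma sortedWeightedSum_nonneg (a : Fin m → ℝ) : 0 ≤ sortedWeightedSum a :=
  (sum_nonneg fun _ _ => by positivity).trans (le_sortedWeightedSum a 1)

lemma sum_mul_le_sortedWeightedSum (a : Fin m → ℝ) {w : Fin m → ℝ} (hw : w ∈ weakL2Ball m) :
    ∑ i, a i * w i ≤ sortedWeightedSum a := by
  set σ := Tuple.sort fun i => -|w i|
  have hanti : Antitone fun k => |w (σ k)| := fun k l hkl => by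
    simpa using Tuple.monotone_sort (fun i => -|w i|) hkl
  calc ∑ i, a i * w i ≤ ∑ i, |a i| * |w i| :=
        sum_le_sum fun i _ => (abs_mul (a i) (w i)).symm ▸ le_abs_self _
    _ = ∑ k, |a (σ k)| * |w (σ k)| := (Equiv.sum_comp σ fun i => |a i| * |w i|).symm
    _ ≤ ∑ k : Fin m, |a (σ k)| / √((k : ℕ) + 1) := by
        refine sum_le_sum fun k _ => ?_
        rw [div_eq_mul_one_div]
        exact mul_le_mul_of_nonneg_left
          (WeakL2Ball.abs_apply_le_of_antitone hw hanti k) (abs_nonneg _)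
    _ ≤ sortedWeightedSum a := le_sortedWeightedSum a σ

lemma exists_mem_weakL2Ball_sum_mul_eq (a : Fin m → ℝ) (σ : Equiv.Perm (Fin m)) :
    ∃ w ∈ weakL2Ball m, ∑ i, a i * w i = ∑ k : Fin m, |a (σ k)| / √((k : ℕ) + 1) := by
  set w : Fin m → ℝ := fun i => SignType.sign (a i) / √((σ.symm i : ℕ) + 1)
  have hw : ∀ k, w (σ k) = SignType.sign (a (σ k)) / √((k : ℕ) + 1) := fun k => by
    simp only [w, Equiv.symm_apply_apply]
  refine ⟨w, WeakL2Ball.mem_of_abs_le σ fun k => ?_, ?_⟩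
  · have hsign : |(SignType.sign (a (σ k)) : ℝ)| ≤ 1 := by
      rcases lt_trichotomy (a (σ k)) 0 with h | h | h <;> simp [h]
    rw [hw, abs_div, abs_of_nonneg (Real.sqrt_nonneg _)]
    gcongr
  · rw [← Equiv.sum_comp σ]
    refine sum_congr rfl fun k _ => ?_
    rw [hw, mul_div_assoc', self_mul_sign]

theorem iSup_weakL2Ball_sum_mul_eq (a : Fin m → ℝ) :
    ⨆ w : weakL2Ball m, ∑ i, a i * (w : Fin m → ℝ) i = sortedWeightedSum a := by
  have : Nonempty (weakL2Ball m) :=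
    ⟨⟨0, WeakL2Ball.mem_of_abs_le 1 fun _ => by simp⟩⟩
  refine le_antisymm (ciSup_le fun w => sum_mul_le_sortedWeightedSum a w.2) (ciSup_le fun σ => ?_)
  obtain ⟨w, hw, heq⟩ := exists_mem_weakL2Ball_sum_mul_eq a σ
  rw [← heq]
  exact le_ciSup (f := fun w : weakL2Ball m => ∑ i, a i * (w : Fin m → ℝ) i)
    ⟨_, Set.forall_mem_range.2 fun w => sum_mul_le_sortedWeightedSum a w.2⟩ ⟨w, hw⟩

lemma mul_le_pow_four_div_add (x : ℝ) {y t : ℝ} (hy : 0 ≤ y) (ht : 0 < t) :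
    x * y ≤ x ^ 4 / (4 * t ^ 3) + 3 / 4 * t * y ^ ((4 : ℝ) / 3) := by
  obtain ⟨z, hz, rfl⟩ : ∃ z : ℝ, 0 ≤ z ∧ z ^ 3 = y :=
    ⟨y ^ ((1 : ℝ) / 3), by positivity, by rw [← Real.rpow_mul_natCast hy]; norm_num⟩
  have hz4 : (z ^ 3) ^ ((4 : ℝ) / 3) = z ^ 4 := by
    rw [← Real.rpow_natCast z 3, ← Real.rpow_mul hz]
    norm_num
  rw [hz4, div_add' _ _ _ (by positivity), le_div_iff₀ (by positivity)]
  -- `x⁴ + 3u⁴ - 4xu³ = (x - u)²((x + u)² + 2u²)` with `u = tz`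
  nlinarith [mul_nonneg (sq_nonneg (x - t * z)) (add_nonneg (sq_nonneg (x + t * z))
    (mul_nonneg zero_le_two (sq_nonneg (t * z))))]

lemma rpow_neg_two_thirds_le_sub (n : ℕ) :
    ((n : ℝ) + 1) ^ (-(2 / 3) : ℝ) ≤
      3 * (((n : ℝ) + 1) ^ ((1 : ℝ) / 3) - (n : ℝ) ^ ((1 : ℝ) / 3)) := by
  set x := (n : ℝ) ^ ((1 : ℝ) / 3)
  set y := ((n : ℝ) + 1) ^ ((1 : ℝ) / 3)
  have hx : 0 ≤ x := by positivity
  have hy : 0 < y := by positivity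
  have hxy : x ≤ y := Real.rpow_le_rpow (by positivity) (by linarith) (by norm_num)
  have hcube : y ^ 3 - x ^ 3 = 1 := by
    simp only [x, y, ← Real.rpow_mul_natCast (Nat.cast_nonneg n),
      ← Real.rpow_mul_natCast (by positivity : (0 : ℝ) ≤ n + 1)]
    norm_num
  have hlhs : ((n : ℝ) + 1) ^ (-(2 / 3) : ℝ) = (y ^ 2)⁻¹ := by
    rw [← Real.rpow_mul_natCast (by positivity), ← Real.rpow_neg (by positivity)]
    norm_num
  -- `1 = y³ - x³ = (y - x)(y² + xy + x²) ≤ 3(y - x)y²`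
  rw [hlhs, inv_le_iff_one_le_mul₀ (by positivity)]
  nlinarith [mul_nonneg (sub_nonneg.2 hxy) (add_nonneg (mul_nonneg hx (sub_nonneg.2 hxy))
    (mul_nonneg hy.le (sub_nonneg.2 hxy)))]

lemma sum_range_rpow_neg_two_thirds_le (m : ℕ) :
    ∑ i ∈ range m, ((i : ℝ) + 1) ^ (-(2 / 3) : ℝ) ≤ 3 * (m : ℝ) ^ ((1 : ℝ) / 3) :=
  calc ∑ i ∈ range m, ((i : ℝ) + 1) ^ (-(2 / 3) : ℝ)
      ≤ ∑ i ∈ range m, 3 * ((((i + 1 : ℕ) : ℝ)) ^ ((1 : ℝ) / 3) - (i : ℝ) ^ ((1 : ℝ) / 3)) :=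
        sum_le_sum fun i _ => by exact_mod_cast rpow_neg_two_thirds_le_sub i
    _ = 3 * (m : ℝ) ^ ((1 : ℝ) / 3) := by
        rw [← mul_sum, sum_range_sub (fun i : ℕ => (i : ℝ) ^ ((1 : ℝ) / 3))]
        simp

lemma sortedWeightedSum_le (a : Fin m → ℝ) {t : ℝ} (ht : 0 < t) :
    sortedWeightedSum a ≤ (∑ i, a i ^ 4) / (4 * t ^ 3) + 9 / 4 * t * (m : ℝ) ^ ((1 : ℝ) / 3) := by
  have hweight (i : ℕ) : (1 / √((i : ℝ) + 1)) ^ ((4 : ℝ) / 3) = ((i : ℝ) + 1) ^ (-(2 / 3) : ℝ) := by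
    rw [Real.sqrt_eq_rpow, one_div, ← Real.rpow_neg (by positivity),
      ← Real.rpow_mul (by positivity)]
    norm_num
  refine ciSup_le fun σ => ?_
  calc ∑ i : Fin m, |a (σ i)| / √((i : ℕ) + 1)
      ≤ ∑ i : Fin m, (|a (σ i)| ^ 4 / (4 * t ^ 3)
          + 3 / 4 * t * (1 / √((i : ℕ) + 1)) ^ ((4 : ℝ) / 3)) :=
        sum_le_sum fun i _ => by
          rw [div_eq_mul_one_div]
          exact mul_le_pow_four_div_add _ (by positivity) ht
    _ = (∑ i, a i ^ 4) / (4 * t ^ 3)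
          + 3 / 4 * t * ∑ i ∈ range m, ((i : ℝ) + 1) ^ (-(2 / 3) : ℝ) := by
        simp only [sum_add_distrib, ← sum_div, ← mul_sum, hweight, Even.pow_abs ⟨2, rfl⟩,
          Equiv.sum_comp σ fun i => a i ^ 4]
        rw [Fin.sum_univ_eq_sum_range (fun i => ((i : ℝ) + 1) ^ (-(2 / 3) : ℝ))]
    _ ≤ (∑ i, a i ^ 4) / (4 * t ^ 3) + 9 / 4 * t * (m : ℝ) ^ ((1 : ℝ) / 3) := by
        linarith [mul_le_mul_of_nonneg_left (sum_range_rpow_neg_two_thirds_le m)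
          (by positivity : (0 : ℝ) ≤ 3 / 4 * t)]

theorem integral_sortedWeightedSum_le {Ω : Type*} [MeasurableSpace Ω] {μ : Measure Ω}
    [IsProbabilityMeasure μ] (hm : 0 < m) {g : Fin m → Ω → ℝ} {M : ℝ}
    (hint : ∀ i, Integrable (fun ω => g i ω ^ 4) μ) (hM : ∀ i, ∫ ω, g i ω ^ 4 ∂μ ≤ M) :
    ∫ ω, sortedWeightedSum (fun i => g i ω) ∂μ ≤ (M + 9) / 4 * √m := by
  have hm' : (0 : ℝ) < m := Nat.cast_pos.2 hm
  -- the choice `t = m^(1/6)` balances the two terms of `sortedWeightedSum_le`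
  set t := (m : ℝ) ^ ((1 : ℝ) / 6)
  have ht : 0 < t := by positivity
  have ht3 : t ^ 3 = √m := by
    rw [Real.sqrt_eq_rpow, ← Real.rpow_mul_natCast hm'.le]
    norm_num
  have htm : t * (m : ℝ) ^ ((1 : ℝ) / 3) = √m := by
    rw [Real.sqrt_eq_rpow, ← Real.rpow_add hm']
    norm_num
  have hS : Integrable (fun ω => ∑ i, g i ω ^ 4) μ := integrable_finsetSum _ fun i _ => hint i
  calc ∫ ω, sortedWeightedSum (fun i => g i ω) ∂μ
      ≤ ∫ ω, ((∑ i, g i ω ^ 4) / (4 * t ^ 3) + 9 / 4 * t * (m : ℝ) ^ ((1 : ℝ) / 3)) ∂μ :=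
        integral_mono_of_nonneg (ae_of_all _ fun _ => sortedWeightedSum_nonneg _)
          ((hS.div_const _).add (integrable_const _))
          (ae_of_all _ fun _ => sortedWeightedSum_le _ ht)
    _ = (∑ i, ∫ ω, g i ω ^ 4 ∂μ) / (4 * t ^ 3) + 9 / 4 * t * (m : ℝ) ^ ((1 : ℝ) / 3) := by
        rw [integral_add (hS.div_const _) (integrable_const _), integral_div,
          integral_finsetSum _ fun i _ => hint i, integral_const]
        simp
    _ ≤ m * M / (4 * t ^ 3) + 9 / 4 * t * (m : ℝ) ^ ((1 : ℝ) / 3) := by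
        gcongr
        simpa using sum_le_sum fun i (_ : i ∈ univ) => hM i
    _ = (M + 9) / 4 * √m := by
        rw [ht3, mul_assoc, htm]
        field_simp
        rw [Real.sq_sqrt hm'.le]
        ring

lemma integrable_pow_of_map_eq_gaussianReal {Ω : Type*} [MeasurableSpace Ω] {μ : Measure Ω}
    [IsFiniteMeasure μ] {X : Ω → ℝ} (hX : Measurable X) {μ₀ : ℝ} {v : NNReal}
    (hlaw : μ.map X = gaussianReal μ₀ v) (n : ℕ) : Integrable (fun ω => X ω ^ n) μ := by
  have hmem : MemLp X n μ := by
    rw [← Function.id_comp X, ← memLp_map_measure_iff (by fun_prop) hX.aemeasurable, hlaw]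
    exact memLp_id_gaussianReal n
  exact hmem.integrable_norm_pow'.mono' (hX.pow_const n).aestronglyMeasurable
    (ae_of_all _ fun ω => (norm_pow (X ω) n).le)

/-- For i.i.d. standard Gaussians, `E sup_{w ∈ W_m} ∑ gᵢ wᵢ = E ∑ gᵢ*/√i ≤ C √m`, where
`∑ gᵢ*/√i` is expressed as the maximum over permutations of `∑ |g_{σ(i)}|/√(i+1)`. -/
theorem stmt15 : ∃ C > 0, ∀ (Ω : Type) (_ : MeasurableSpace Ω) (μ : Measure Ω),
    IsProbabilityMeasure μ → ∀ m : ℕ, 1 ≤ m → ∀ g : Fin m → Ω → ℝ,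
    (∀ i, Measurable (g i)) →
    iIndepFun g μ →
    (∀ i, μ.map (g i) = gaussianReal 0 1) →
    (∫ ω, (⨆ w : weakL2Ball m, ∑ i, g i ω * (w : Fin m → ℝ) i) ∂μ) =
      (∫ ω, (⨆ σ : Equiv.Perm (Fin m),
        ∑ i : Fin m, |g (σ i) ω| / Real.sqrt ((i : ℕ) + 1)) ∂μ) ∧
    (∫ ω, (⨆ w : weakL2Ball m, ∑ i, g i ω * (w : Fin m → ℝ) i) ∂μ) ≤
      C * Real.sqrt m := by
  refine ⟨((∫ x, x ^ 4 ∂gaussianReal 0 1) + 9) / 4, by positivity, ?_⟩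
  intro Ω _ μ _ m hm g hg _ hlaw
  simp only [iSup_weakL2Ball_sum_mul_eq]
  refine ⟨rfl, integral_sortedWeightedSum_le hm
    (fun i => integrable_pow_of_map_eq_gaussianReal (hg i) (hlaw i) 4) fun i => ?_⟩
  rw [← hlaw i, integral_map (hg i).aemeasurable (by fun_prop)]
end

section
/- (Haussler-type packing consequence) Let T ⊆ {0,1}^n with VC dimension at most d. Then for every 0 < ε ≤ √n, the maximal ε-separated subset of T in the Euclidean metric of ℝ^n has cardinality at most c(d)·(√n/ε)^{2d}, for some constant c(d) depending only on d. -/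
/-!
Identify a `{0,1}`-vector with the set of its coordinates equal to `1`: the squared Euclidean
distance becomes the size of the symmetric difference, so `S` is a family `𝒜` of subsets of
`Fin n` of VC dimension at most `d` whose members pairwise differ in at least `k = ⌈ε²⌉`
coordinates, and it suffices to show `#𝒜 ≤ 2 (d + 1) (4d + 1)^d (n/k)^d` (Haussler's packing
lemma).

We follow the sampling proof. Pick `m > 4dn/k` coordinates `g : Fin m → Fin n` and weight each
trace of `𝒜` on `g` by the number of members of `𝒜` having it; weight an edge of the
one-inclusion graph of the traces by the smaller weight of its ends. Slicing the weights into
level sets and applying Haussler's bound `#edges ≤ vcDim · #vertices` to each slice bounds the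
total weight by `d · #𝒜`. Conversely, resampling one coordinate of `g` splits every class of
members with the same trace elsewhere, and each pair in a class differs in `k` coordinates, so
the expected weight in each direction is at least `k (#𝒜 - Φ) / 2n`, where by Sauer–Shelah
`Φ = ∑_{i ≤ d} (m choose i)` bounds the number of classes. Comparing gives `#𝒜 ≤ 2Φ`.
-/

open Finset Function
open scoped symmDiff

namespace Haussler

section OneInclusionGraph

variable {α : Type*} [DecidableEq α] {𝒜 : Finset (Finset α)} {a x : α} {s B : Finset α}

/-- The edges of the one-inclusion graph of `𝒜` in direction `a`, indexed by their lower end. -/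
def dirEdges (a : α) (𝒜 : Finset (Finset α)) : Finset (Finset α) :=
  𝒜.filter fun B => a ∉ B ∧ insert a B ∈ 𝒜

@[simp]
lemma mem_dirEdges : B ∈ dirEdges a 𝒜 ↔ B ∈ 𝒜 ∧ a ∉ B ∧ insert a B ∈ 𝒜 := mem_filter

lemma dirEdges_eq_inter : dirEdges a 𝒜 = 𝒜.memberSubfamily a ∩ 𝒜.nonMemberSubfamily a := by
  ext B
  simp only [mem_dirEdges, mem_inter, mem_memberSubfamily, mem_nonMemberSubfamily]
  tauto

lemma card_dirEdges_eq_add (h : x ≠ a) :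
    #(dirEdges x 𝒜) =
      #(dirEdges x (𝒜.memberSubfamily a)) + #(dirEdges x (𝒜.nonMemberSubfamily a)) := by
  have hmem : (dirEdges x 𝒜).memberSubfamily a = dirEdges x (𝒜.memberSubfamily a) := by
    ext B
    simp only [mem_memberSubfamily, mem_dirEdges, mem_insert, h, false_or, insert_comm x a]
    tauto
  have hnon : (dirEdges x 𝒜).nonMemberSubfamily a = dirEdges x (𝒜.nonMemberSubfamily a) := by
    ext B
    simp only [mem_nonMemberSubfamily, mem_dirEdges, mem_insert, h.symm, false_or]
    tauto
  rw [← hmem, ← hnon, card_memberSubfamily_add_card_nonMemberSubfamily]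

lemma card_dirEdges_add_card_dirEdges_le (x : α) (𝒜 ℬ : Finset (Finset α)) :
    #(dirEdges x 𝒜) + #(dirEdges x ℬ) ≤ #(dirEdges x (𝒜 ∪ ℬ)) + #(dirEdges x (𝒜 ∩ ℬ)) := by
  rw [← card_union_add_card_inter]
  gcongr <;> intro B <;> simp only [mem_union, mem_inter, mem_dirEdges] <;> tauto

lemma vcDim_image_erase_le : (𝒜.image (erase · a)).vcDim ≤ 𝒜.vcDim := by
  refine Finset.sup_le fun s hs => Shatters.card_le_vcDim fun t ht => ?_
  have hs := mem_shatterer.1 hs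
  obtain ⟨_, hv, hsv⟩ := hs.exists_superset
  obtain ⟨v, -, rfl⟩ := mem_image.1 hv
  have ha : a ∉ s := fun ha => notMem_erase a v (hsv ha)
  obtain ⟨_, hu, rfl⟩ := hs ht
  obtain ⟨u, hu𝒜, rfl⟩ := mem_image.1 hu
  exact ⟨u, hu𝒜, by rw [inter_erase, erase_eq_of_notMem (fun h => ha (mem_inter.1 h).1)]⟩

lemma notMem_of_shatters_dirEdges (hs : (dirEdges a 𝒜).Shatters s) : a ∉ s := by
  obtain ⟨B, hB, hsB⟩ := hs.exists_superset
  exact fun ha => (mem_dirEdges.1 hB).2.1 (hsB ha)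

lemma shatters_insert_of_shatters_dirEdges (hs : (dirEdges a 𝒜).Shatters s) :
    𝒜.Shatters (insert a s) := by
  intro t ht
  by_cases hat : a ∈ t
  · obtain ⟨B, hB, hsB⟩ := hs (t := t.erase a) (by simpa [subset_insert_iff] using ht)
    refine ⟨insert a B, (mem_dirEdges.1 hB).2.2, ?_⟩
    rw [← insert_inter_distrib, hsB, insert_erase hat]
  · obtain ⟨B, hB, hsB⟩ := hs ((subset_insert_iff_of_notMem hat).1 ht)
    refine ⟨B, (mem_dirEdges.1 hB).1, ?_⟩
    rw [insert_inter_of_notMem (mem_dirEdges.1 hB).2.1, hsB]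

lemma vcDim_dirEdges_add_one_le (h : (dirEdges a 𝒜).Nonempty) :
    (dirEdges a 𝒜).vcDim + 1 ≤ 𝒜.vcDim := by
  obtain ⟨s, hs, hsd⟩ := exists_mem_eq_sup _ ⟨∅, mem_shatterer.2 (shatters_empty.2 h)⟩ card
  rw [vcDim, hsd, ← card_insert_of_notMem (notMem_of_shatters_dirEdges (mem_shatterer.1 hs))]
  exact (shatters_insert_of_shatters_dirEdges (mem_shatterer.1 hs)).card_le_vcDim

/-- **Haussler's edge bound.** Split `𝒜` along `a` into `ℳ = 𝒜.memberSubfamily a` and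
`𝒩 = 𝒜.nonMemberSubfamily a`: edges in the other directions are submodular in the family, and the
edges in direction `a` form `ℳ ∩ 𝒩`, whose VC dimension is smaller than that of `𝒜`. -/
theorem sum_card_dirEdges_le (u : Finset α) (𝒜 : Finset (Finset α)) :
    ∑ x ∈ u, #(dirEdges x 𝒜) ≤ 𝒜.vcDim * #𝒜 := by
  induction u using Finset.cons_induction generalizing 𝒜 with
  | empty => simp
  | cons a u ha ih =>
    set ℳ := 𝒜.memberSubfamily a
    set 𝒩 := 𝒜.nonMemberSubfamily a
    have hsplit : ∑ x ∈ u, #(dirEdges x 𝒜) ≤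
        ∑ x ∈ u, #(dirEdges x (ℳ ∪ 𝒩)) + ∑ x ∈ u, #(dirEdges x (ℳ ∩ 𝒩)) := by
      rw [← sum_add_distrib]
      refine sum_le_sum fun x hx => ?_
      rw [card_dirEdges_eq_add (ne_of_mem_of_not_mem hx ha)]
      exact card_dirEdges_add_card_dirEdges_le x ℳ 𝒩
    have hunion : (ℳ ∪ 𝒩).vcDim ≤ 𝒜.vcDim := by
      rw [memberSubfamily_union_nonMemberSubfamily]
      exact vcDim_image_erase_le
    have hinter : #(ℳ ∩ 𝒩) * ((ℳ ∩ 𝒩).vcDim + 1) ≤ #(ℳ ∩ 𝒩) * 𝒜.vcDim := by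
      rw [← dirEdges_eq_inter]
      rcases (dirEdges a 𝒜).eq_empty_or_nonempty with h | h
      · simp [h]
      · exact Nat.mul_le_mul_left _ (vcDim_dirEdges_add_one_le h)
    have hcard : #(ℳ ∪ 𝒩) + #(ℳ ∩ 𝒩) = #𝒜 := by
      rw [card_union_add_card_inter, card_memberSubfamily_add_card_nonMemberSubfamily]
    calc ∑ x ∈ cons a u ha, #(dirEdges x 𝒜)
        = #(ℳ ∩ 𝒩) + ∑ x ∈ u, #(dirEdges x 𝒜) := by rw [sum_cons, dirEdges_eq_inter]
      _ ≤ #(ℳ ∩ 𝒩) + ((ℳ ∪ 𝒩).vcDim * #(ℳ ∪ 𝒩) + (ℳ ∩ 𝒩).vcDim * #(ℳ ∩ 𝒩)) := by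
        grw [hsplit, ih, ih]
      _ ≤ 𝒜.vcDim * #(ℳ ∪ 𝒩) + 𝒜.vcDim * #(ℳ ∩ 𝒩) := by nlinarith
      _ = 𝒜.vcDim * #𝒜 := by rw [← mul_add, hcard]

end OneInclusionGraph

section SeparatedFamily

variable {α : Type*} [DecidableEq α]

lemma card_symmDiff (p q : Finset α) : #(p ∆ q) = #(p \ q) + #(q \ p) := by
  rw [symmDiff_def, sup_eq_union, card_union_of_disjoint disjoint_sdiff_sdiff]

variable [Fintype α]

lemma sum_sum_card_sdiff (ℱ : Finset (Finset α)) :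
    ∑ p ∈ ℱ, ∑ q ∈ ℱ, #(p \ q) = ∑ y, #(ℱ.filter (y ∈ ·)) * #(ℱ.filter (y ∉ ·)) := by
  calc ∑ p ∈ ℱ, ∑ q ∈ ℱ, #(p \ q)
      = ∑ p ∈ ℱ, ∑ q ∈ ℱ, ∑ y, if y ∈ p ∧ y ∉ q then (1 : ℕ) else 0 := by
        refine sum_congr rfl fun p _ => sum_congr rfl fun q _ => ?_
        rw [sum_boole]
        congr 1
        ext y
        simp
    _ = ∑ y, ∑ p ∈ ℱ, ∑ q ∈ ℱ, if y ∈ p ∧ y ∉ q then 1 else 0 :=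
        (sum_congr rfl fun p _ => sum_comm).trans sum_comm
    _ = ∑ y, #(ℱ.filter (y ∈ ·)) * #(ℱ.filter (y ∉ ·)) := by
        simp_rw [card_filter, sum_mul_sum, ite_zero_mul_ite_zero, mul_one]

lemma mul_le_add_mul_min (a b : ℕ) : a * b ≤ (a + b) * min a b := by
  rcases le_total a b with h | h
  · rw [min_eq_left h]; nlinarith
  · rw [min_eq_right h]; nlinarith

/-- Each ordered pair of distinct members of a `k`-separated family is split by at least `k`
coordinates, while coordinate `y` splits `U_y V_y ≤ #ℱ · min U_y V_y` ordered pairs. -/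
theorem card_sub_one_mul_le_sum_min {k : ℕ} {ℱ : Finset (Finset α)}
    (hsep : (ℱ : Set (Finset α)).Pairwise fun p q => k ≤ #(p ∆ q)) :
    (#ℱ - 1) * k ≤ 2 * ∑ y, min #(ℱ.filter (y ∈ ·)) #(ℱ.filter (y ∉ ·)) := by
  rcases ℱ.eq_empty_or_nonempty with rfl | hne
  · simp
  have hpairs : #ℱ * ((#ℱ - 1) * k) ≤ ∑ p ∈ ℱ, ∑ q ∈ ℱ, #(p ∆ q) := by
    rw [← smul_eq_mul, ← sum_const]
    refine sum_le_sum fun p hp => ?_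
    calc (#ℱ - 1) * k = ∑ q ∈ ℱ.erase p, k := by
          rw [sum_const, card_erase_of_mem hp, smul_eq_mul]
      _ ≤ ∑ q ∈ ℱ.erase p, #(p ∆ q) := sum_le_sum fun q hq =>
          hsep hp (mem_of_mem_erase hq) (ne_of_mem_erase hq).symm
      _ ≤ ∑ q ∈ ℱ, #(p ∆ q) := sum_le_sum_of_subset (erase_subset p ℱ)
  have hsplit : ∑ p ∈ ℱ, ∑ q ∈ ℱ, #(p ∆ q) = 2 * ∑ p ∈ ℱ, ∑ q ∈ ℱ, #(p \ q) := by
    simp_rw [card_symmDiff, sum_add_distrib]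
    rw [sum_comm (f := fun p q => #(q \ p))]
    ring
  have hprod : ∀ y, #(ℱ.filter (y ∈ ·)) * #(ℱ.filter (y ∉ ·)) ≤
      #ℱ * min #(ℱ.filter (y ∈ ·)) #(ℱ.filter (y ∉ ·)) := fun y => by
    simpa only [card_filter_add_card_filter_not] using
      mul_le_add_mul_min #(ℱ.filter (y ∈ ·)) #(ℱ.filter (y ∉ ·))
  refine Nat.le_of_mul_le_mul_left ?_ hne.card_pos
  calc #ℱ * ((#ℱ - 1) * k) ≤ 2 * ∑ y, #(ℱ.filter (y ∈ ·)) * #(ℱ.filter (y ∉ ·)) := by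
        rw [← sum_sum_card_sdiff, ← hsplit]; exact hpairs
    _ ≤ 2 * ∑ y, #ℱ * min #(ℱ.filter (y ∈ ·)) #(ℱ.filter (y ∉ ·)) := by
        exact Nat.mul_le_mul_left _ (sum_le_sum fun y _ => hprod y)
    _ = #ℱ * (2 * ∑ y, min #(ℱ.filter (y ∈ ·)) #(ℱ.filter (y ∉ ·))) := by
        rw [← mul_sum]; ring

end SeparatedFamily

lemma sum_card_filter_le_eq_sum {β : Type*} (s : Finset β) (f : β → ℕ) {N : ℕ}
    (hf : ∀ b ∈ s, f b ≤ N) : ∑ t ∈ Icc 1 N, #(s.filter (t ≤ f ·)) = ∑ b ∈ s, f b := by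
  simp_rw [card_filter]
  rw [sum_comm]
  refine sum_congr rfl fun b hb => ?_
  rw [sum_boole, Nat.cast_id, show (Icc 1 N).filter (· ≤ f b) = Icc 1 (f b) from ?_,
    Nat.card_Icc, Nat.add_sub_cancel]
  ext t
  simp only [mem_filter, mem_Icc]
  have := hf b hb
  omega

lemma card_sub_card_image_le_sum_card_fiber_sub_one {β γ : Type*} [DecidableEq γ]
    (s : Finset β) (f : β → γ) {t : Finset γ} (h : ∀ b ∈ s, f b ∈ t) :
    #s - #(s.image f) ≤ ∑ c ∈ t, (#(s.filter (f · = c)) - 1) := by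
  have hfiber : ∀ c ∈ s.image f, 1 ≤ #(s.filter (f · = c)) := by
    intro c hc
    obtain ⟨b, hb, rfl⟩ := mem_image.1 hc
    exact card_pos.2 ⟨b, mem_filter.2 ⟨hb, rfl⟩⟩
  calc #s - #(s.image f) = ∑ c ∈ s.image f, (#(s.filter (f · = c)) - 1) := by
        rw [sum_tsub_distrib _ hfiber, ← card_eq_sum_card_image, ← card_eq_sum_ones]
    _ ≤ ∑ c ∈ t, (#(s.filter (f · = c)) - 1) :=
        sum_le_sum_of_subset (image_subset_iff.2 h)

lemma sum_sum_update {α ι M : Type*} [Fintype α] [Fintype ι] [DecidableEq ι] [AddCommMonoid M]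
    (F : (ι → α) → M) (j : ι) :
    ∑ g, ∑ y, F (update g j y) = Fintype.card α • ∑ g, F g := by
  have hinv : Involutive fun p : (ι → α) × α => (update p.1 j p.2, p.1 j) := fun p => by simp
  calc ∑ g, ∑ y, F (update g j y) = ∑ p : (ι → α) × α, F (update p.1 j p.2) :=
        (Fintype.sum_prod_type' _).symm
    _ = ∑ p : (ι → α) × α, F p.1 := Fintype.sum_equiv (hinv.toPerm _) _ _ fun _ => rfl
    _ = Fintype.card α • ∑ g, F g := by
        rw [Fintype.sum_prod_type, smul_sum]
        simp only [sum_const, card_univ]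

section Sampling

variable {α ι : Type*} [DecidableEq α] [Fintype ι] {𝒜 : Finset (Finset α)} {g : ι → α} {j : ι}

def sampleTrace (g : ι → α) (p : Finset α) : Finset ι := univ.filter (g · ∈ p)

@[simp]
lemma mem_sampleTrace {p : Finset α} {i : ι} : i ∈ sampleTrace g p ↔ g i ∈ p := by
  simp [sampleTrace]

variable [DecidableEq ι]

lemma injOn_of_shatters_image_sampleTrace {τ : Finset ι}
    (hτ : (𝒜.image (sampleTrace g)).Shatters τ) : Set.InjOn g τ := by
  intro i hi i' hi' hgi
  obtain ⟨_, hB, hτB⟩ := hτ.exists_inter_eq_singleton hi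
  obtain ⟨p, -, rfl⟩ := mem_image.1 hB
  have hip : g i ∈ p := mem_sampleTrace.1 (mem_inter.1 (hτB ▸ mem_singleton_self i)).2
  have : i' ∈ τ ∩ sampleTrace g p := mem_inter.2 ⟨hi', mem_sampleTrace.2 (hgi ▸ hip)⟩
  rw [hτB, mem_singleton] at this
  exact this.symm

lemma shatters_image_of_shatters_image_sampleTrace {τ : Finset ι}
    (hτ : (𝒜.image (sampleTrace g)).Shatters τ) : 𝒜.Shatters (τ.image g) := by
  intro J hJ
  obtain ⟨_, hB, hτB⟩ := hτ (filter_subset (g · ∈ J) τ)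
  obtain ⟨p, hp, rfl⟩ := mem_image.1 hB
  refine ⟨p, hp, ext fun x => ⟨fun hx => ?_, fun hx => ?_⟩⟩
  · obtain ⟨hxτ, hxp⟩ := mem_inter.1 hx
    obtain ⟨i, hi, rfl⟩ := mem_image.1 hxτ
    have : i ∈ τ ∩ sampleTrace g p := mem_inter.2 ⟨hi, mem_sampleTrace.2 hxp⟩
    rw [hτB] at this
    exact (mem_filter.1 this).2
  · obtain ⟨i, hi, rfl⟩ := mem_image.1 (hJ hx)
    have : i ∈ τ.filter (g · ∈ J) := mem_filter.2 ⟨hi, hx⟩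
    rw [← hτB, mem_inter, mem_sampleTrace] at this
    exact mem_inter.2 ⟨mem_image_of_mem g hi, this.2⟩

lemma vcDim_image_sampleTrace_le (g : ι → α) (𝒜 : Finset (Finset α)) :
    (𝒜.image (sampleTrace g)).vcDim ≤ 𝒜.vcDim := by
  refine Finset.sup_le fun τ hτ => ?_
  rw [mem_shatterer] at hτ
  rw [← card_image_of_injOn (injOn_of_shatters_image_sampleTrace hτ)]
  exact (shatters_image_of_shatters_image_sampleTrace hτ).card_le_vcDim

lemma card_image_sampleTrace_le (g : ι → α) (𝒜 : Finset (Finset α)) :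
    #(𝒜.image (sampleTrace g)) ≤ ∑ i ∈ Iic 𝒜.vcDim, (Fintype.card ι).choose i :=
  (card_le_card_shatterer _).trans <| card_shatterer_le_sum_vcDim.trans <|
    sum_le_sum_of_subset (Iic_subset_Iic.2 (vcDim_image_sampleTrace_le g 𝒜))

def weight (𝒜 : Finset (Finset α)) (g : ι → α) (B : Finset ι) : ℕ :=
  #(𝒜.filter (sampleTrace g · = B))

/-- The edges of the one-inclusion graph of the traces of `𝒜` on `g` in direction `j`, each
counted with the smaller weight of its two ends. -/
def weightedEdges (𝒜 : Finset (Finset α)) (g : ι → α) (j : ι) : ℕ :=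
  ∑ B ∈ univ.filter (j ∉ ·), min (weight 𝒜 g (insert j B)) (weight 𝒜 g B)

lemma weight_le (B : Finset ι) : weight 𝒜 g B ≤ #𝒜 := card_filter_le _ _

lemma sum_weight : ∑ B, weight 𝒜 g B = #𝒜 :=
  (card_eq_sum_card_fiberwise fun _ _ => mem_univ _).symm

theorem sum_weightedEdges_le (g : ι → α) : ∑ j, weightedEdges 𝒜 g j ≤ 𝒜.vcDim * #𝒜 := by
  set L : ℕ → Finset (Finset ι) := fun t => univ.filter (t ≤ weight 𝒜 g ·)
  have hedges : ∀ j, weightedEdges 𝒜 g j = ∑ t ∈ Icc 1 #𝒜, #(dirEdges j (L t)) := by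
    intro j
    rw [weightedEdges, ← sum_card_filter_le_eq_sum _ _ fun B _ => (min_le_right _ _).trans
      (weight_le B)]
    refine sum_congr rfl fun t _ => congr_arg card ?_
    ext B
    simp only [L, mem_dirEdges, mem_filter, mem_univ, true_and, le_min_iff]
    tauto
  have hvc : ∀ t ∈ Icc 1 #𝒜, (L t).vcDim ≤ 𝒜.vcDim := by
    intro t ht
    refine (vcDim_mono fun B hB => ?_).trans (vcDim_image_sampleTrace_le g 𝒜)
    have : 0 < weight 𝒜 g B := (mem_Icc.1 ht).1.trans (mem_filter.1 hB).2
    obtain ⟨p, hp⟩ := card_pos.1 this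
    exact mem_image.2 ⟨p, (mem_filter.1 hp).1, (mem_filter.1 hp).2⟩
  calc ∑ j, weightedEdges 𝒜 g j = ∑ t ∈ Icc 1 #𝒜, ∑ j, #(dirEdges j (L t)) := by
        simp_rw [hedges]; exact sum_comm
    _ ≤ ∑ t ∈ Icc 1 #𝒜, 𝒜.vcDim * #(L t) := sum_le_sum fun t ht =>
        (sum_card_dirEdges_le _ _).trans (Nat.mul_le_mul_right _ (hvc t ht))
    _ = 𝒜.vcDim * #𝒜 := by
        rw [← mul_sum, sum_card_filter_le_eq_sum univ _ fun B _ => weight_le B, sum_weight]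

lemma erase_sampleTrace_update (g : ι → α) (j : ι) (y : α) (p : Finset α) :
    (sampleTrace (update g j y) p).erase j = (sampleTrace g p).erase j := by
  ext i
  by_cases h : i = j <;> simp [h]

lemma weight_update_insert {c : Finset ι} (hc : j ∉ c) (y : α) :
    weight 𝒜 (update g j y) (insert j c) =
      #((𝒜.filter fun p => (sampleTrace g p).erase j = c).filter (y ∈ ·)) := by
  rw [weight, filter_filter]
  refine congr_arg card (filter_congr fun p _ => ?_)
  rw [← erase_sampleTrace_update g j y, ← update_self j y g, ← mem_sampleTrace, update_self]
  constructor
  · rintro h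
    exact ⟨h ▸ erase_insert hc, h ▸ mem_insert_self j c⟩
  · rintro ⟨h, hj⟩
    rw [← h, insert_erase hj]

lemma weight_update {c : Finset ι} (hc : j ∉ c) (y : α) :
    weight 𝒜 (update g j y) c =
      #((𝒜.filter fun p => (sampleTrace g p).erase j = c).filter (y ∉ ·)) := by
  rw [weight, filter_filter]
  refine congr_arg card (filter_congr fun p _ => ?_)
  rw [← erase_sampleTrace_update g j y, ← update_self j y g, ← mem_sampleTrace, update_self]
  constructor
  · rintro rfl
    exact ⟨erase_eq_of_notMem hc, hc⟩
  · rintro ⟨h, hj⟩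
    rwa [erase_eq_of_notMem hj] at h

theorem mul_card_sub_le_sum_weightedEdges_update [Fintype α] {k : ℕ}
    (hsep : (𝒜 : Set (Finset α)).Pairwise fun p q => k ≤ #(p ∆ q)) (g : ι → α) (j : ι) :
    k * (#𝒜 - ∑ i ∈ Iic 𝒜.vcDim, (Fintype.card ι).choose i) ≤
      2 * ∑ y, weightedEdges 𝒜 (update g j y) j := by
  set cls : Finset α → Finset ι := fun p => (sampleTrace g p).erase j
  set ℱ : Finset ι → Finset (Finset α) := fun c => 𝒜.filter (cls · = c)
  have hcls : #(𝒜.image cls) ≤ ∑ i ∈ Iic 𝒜.vcDim, (Fintype.card ι).choose i :=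
    calc #(𝒜.image cls) = #((𝒜.image (sampleTrace g)).image (erase · j)) := by
          rw [image_image]; rfl
      _ ≤ #(𝒜.image (sampleTrace g)) := card_image_le
      _ ≤ _ := card_image_sampleTrace_le g 𝒜
  have hW : ∀ y, weightedEdges 𝒜 (update g j y) j = ∑ c ∈ univ.filter (j ∉ ·),
      min #((ℱ c).filter (y ∈ ·)) #((ℱ c).filter (y ∉ ·)) := fun y =>
    sum_congr rfl fun c hc => by
      rw [weight_update_insert (mem_filter.1 hc).2, weight_update (mem_filter.1 hc).2]
  calc k * (#𝒜 - ∑ i ∈ Iic 𝒜.vcDim, (Fintype.card ι).choose i)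
      ≤ k * (#𝒜 - #(𝒜.image cls)) := by gcongr
    _ ≤ k * ∑ c ∈ univ.filter (j ∉ ·), (#(ℱ c) - 1) := by
        gcongr
        exact card_sub_card_image_le_sum_card_fiber_sub_one 𝒜 cls fun p _ => by simp [cls]
    _ = ∑ c ∈ univ.filter (j ∉ ·), (#(ℱ c) - 1) * k := by
        rw [mul_sum]; simp_rw [mul_comm k]
    _ ≤ ∑ c ∈ univ.filter (j ∉ ·), 2 * ∑ y, min #((ℱ c).filter (y ∈ ·)) #((ℱ c).filter (y ∉ ·)) :=
        sum_le_sum fun c _ => card_sub_one_mul_le_sum_min (hsep.mono (filter_subset _ _))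
    _ = 2 * ∑ y, weightedEdges 𝒜 (update g j y) j := by
        simp_rw [hW]; rw [← mul_sum, sum_comm]

theorem card_le_two_mul_sum_choose [Fintype α] [Nonempty α] {k d : ℕ}
    (hsep : (𝒜 : Set (Finset α)).Pairwise fun p q => k ≤ #(p ∆ q)) (hd : 𝒜.vcDim ≤ d)
    (hm : 4 * d * Fintype.card α < Fintype.card ι * k) :
    #𝒜 ≤ 2 * ∑ i ∈ Iic d, (Fintype.card ι).choose i := by
  set n := Fintype.card α
  set m := Fintype.card ι
  set Φ := ∑ i ∈ Iic 𝒜.vcDim, m.choose i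
  have hupper : ∑ j, ∑ g : ι → α, weightedEdges 𝒜 g j ≤ n ^ m * (d * #𝒜) := by
    rw [sum_comm]
    calc _ ≤ ∑ _g : ι → α, d * #𝒜 :=
          sum_le_sum fun g _ => (sum_weightedEdges_le g).trans (by gcongr)
      _ = _ := by simp [sum_const, n, m]
  have hlower : ∀ j, n ^ m * (k * (#𝒜 - Φ)) ≤ 2 * (n * ∑ g : ι → α, weightedEdges 𝒜 g j) := by
    intro j
    calc n ^ m * (k * (#𝒜 - Φ)) = ∑ _g : ι → α, k * (#𝒜 - Φ) := by
          simp [sum_const, n, m]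
      _ ≤ ∑ g : ι → α, 2 * ∑ y, weightedEdges 𝒜 (update g j y) j :=
          sum_le_sum fun g _ => mul_card_sub_le_sum_weightedEdges_update hsep g j
      _ = 2 * (n * ∑ g : ι → α, weightedEdges 𝒜 g j) := by
          rw [← mul_sum, sum_sum_update (weightedEdges 𝒜 · j), smul_eq_mul]
  have hcomb : n ^ m * (m * k * (#𝒜 - Φ)) ≤ n ^ m * (2 * n * d * #𝒜) :=
    calc n ^ m * (m * k * (#𝒜 - Φ)) = ∑ _j : ι, n ^ m * (k * (#𝒜 - Φ)) := by
          simp only [sum_const, card_univ, smul_eq_mul, m]; ring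
      _ ≤ ∑ j, 2 * (n * ∑ g : ι → α, weightedEdges 𝒜 g j) := sum_le_sum fun j _ => hlower j
      _ = 2 * n * ∑ j, ∑ g : ι → α, weightedEdges 𝒜 g j := by
          rw [mul_sum]; simp_rw [mul_assoc]
      _ ≤ 2 * n * (n ^ m * (d * #𝒜)) := by gcongr
      _ = n ^ m * (2 * n * d * #𝒜) := by ring
  have hcomb' := Nat.le_of_mul_le_mul_left hcomb (pow_pos Fintype.card_pos m)
  have hhalf : 2 * (#𝒜 - Φ) ≤ #𝒜 := by
    by_contra! h
    have h1 := Nat.mul_le_mul_right (#𝒜 - Φ) (show 4 * d * n + 1 ≤ m * k by omega)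
    have h2 := Nat.mul_le_mul_left (2 * d * n) (show #𝒜 + 1 ≤ 2 * (#𝒜 - Φ) by omega)
    nlinarith
  have hΦ : Φ ≤ ∑ i ∈ Iic d, m.choose i := sum_le_sum_of_subset (Iic_subset_Iic.2 hd)
  omega

end Sampling

lemma sum_choose_le_mul_pow {m : ℕ} (hm : 1 ≤ m) (d : ℕ) :
    ∑ i ∈ Iic d, m.choose i ≤ (d + 1) * m ^ d :=
  calc ∑ i ∈ Iic d, m.choose i ≤ ∑ _i ∈ Iic d, m ^ d := sum_le_sum fun i hi =>
        (Nat.choose_le_pow m i).trans (Nat.pow_le_pow_right hm (mem_Iic.1 hi))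
    _ = (d + 1) * m ^ d := by rw [sum_const, Nat.card_Iic, smul_eq_mul]

theorem card_le_of_pairwise_le_card_symmDiff {α : Type*} [DecidableEq α] [Fintype α]
    {𝒜 : Finset (Finset α)} {k d : ℕ}
    (hsep : (𝒜 : Set (Finset α)).Pairwise fun p q => k ≤ #(p ∆ q)) (hd : 𝒜.vcDim ≤ d)
    (hk : 0 < k) (hkn : k ≤ Fintype.card α) :
    (#𝒜 : ℝ) ≤ 2 * (d + 1) * (4 * d + 1) ^ d * ((Fintype.card α : ℝ) / k) ^ d := by
  set n := Fintype.card α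
  have : Nonempty α := Fintype.card_pos_iff.1 (hk.trans_le hkn)
  set m := 4 * d * n / k + 1
  have hm : 4 * d * n < Fintype.card (Fin m) * k := by
    rw [Fintype.card_fin, add_mul, one_mul]
    exact Nat.lt_div_mul_add hk
  have hcard := card_le_two_mul_sum_choose (ι := Fin m) hsep hd hm
  rw [Fintype.card_fin] at hcard
  replace hcard :=
    hcard.trans (Nat.mul_le_mul_left 2 (sum_choose_le_mul_pow (Nat.le_add_left 1 _) d))
  have hnk : (1 : ℝ) ≤ n / k := by
    rw [one_le_div (by positivity)]
    exact_mod_cast hkn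
  have hmR : (m : ℝ) ≤ (4 * d + 1) * (n / k) := by
    have h := Nat.cast_div_le (α := ℝ) (m := 4 * d * n) (n := k)
    have hm : (m : ℝ) = ((4 * d * n / k : ℕ) : ℝ) + 1 := by simp [m]
    push_cast at h hm
    rw [mul_div_assoc] at h
    linarith
  calc (#𝒜 : ℝ) ≤ 2 * ((d + 1) * m ^ d) := by exact_mod_cast hcard
    _ ≤ 2 * ((d + 1) * ((4 * d + 1) * (n / k)) ^ d) := by gcongr
    _ = 2 * (d + 1) * (4 * d + 1) ^ d * (n / k) ^ d := by rw [mul_pow]; ring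

section BinaryVectors

variable {ι : Type*} [Fintype ι] {a b : ι → ℝ}

noncomputable def onesSet (t : ι → ℝ) : Finset ι := univ.filter (t · = 1)

@[simp]
lemma mem_onesSet {t : ι → ℝ} {i : ι} : i ∈ onesSet t ↔ t i = 1 := by simp [onesSet]

lemma injOn_onesSet {S : Set (ι → ℝ)} (hS : ∀ t ∈ S, ∀ i, t i = 0 ∨ t i = 1) :
    Set.InjOn onesSet S := by
  intro a ha b hb hab
  funext i
  have hi : a i = 1 ↔ b i = 1 := by rw [← mem_onesSet, hab, mem_onesSet]
  rcases hS a ha i with h | h <;> rcases hS b hb i with h' | h' <;> simp_all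

variable [DecidableEq ι]

lemma sum_sq_sub_eq_card_symmDiff (ha : ∀ i, a i = 0 ∨ a i = 1) (hb : ∀ i, b i = 0 ∨ b i = 1) :
    ∑ i, (a i - b i) ^ 2 = #(onesSet a ∆ onesSet b) := by
  have hcard : (#(onesSet a ∆ onesSet b) : ℝ) =
      ∑ i, if i ∈ onesSet a ∆ onesSet b then 1 else 0 := by
    rw [sum_ite_mem, univ_inter, sum_const, nsmul_eq_mul, mul_one]
  rw [hcard]
  refine sum_congr rfl fun i _ => ?_
  rcases ha i with h | h <;> rcases hb i with h' | h' <;> norm_num [mem_symmDiff, h, h']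

lemma pairwise_ceil_sq_le_card_symmDiff {S : Finset (ι → ℝ)} {ε : ℝ} (hε : 0 < ε)
    (hS : ∀ t ∈ S, ∀ i, t i = 0 ∨ t i = 1)
    (hsep : ∀ a ∈ S, ∀ b ∈ S, a ≠ b → ε ≤ √(∑ i, (a i - b i) ^ 2)) :
    (S.image onesSet : Set (Finset ι)).Pairwise fun p q => ⌈ε ^ 2⌉₊ ≤ #(p ∆ q) := by
  rw [coe_image]
  rintro _ ⟨a, ha, rfl⟩ _ ⟨b, hb, rfl⟩ hab
  refine Nat.ceil_le.2 ?_
  rw [← sum_sq_sub_eq_card_symmDiff (hS a ha) (hS b hb)]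
  exact (Real.le_sqrt hε.le (by positivity)).1 (hsep a ha b hb (ne_of_apply_ne _ hab))

lemma vcDim_image_onesSet_le {T : Set (ι → ℝ)} {S : Finset (ι → ℝ)} {d : ℕ} (hST : ↑S ⊆ T)
    (hT : ∀ t ∈ T, ∀ i, t i = 0 ∨ t i = 1)
    (hVC : ∀ σ : Finset ι,
      (∀ J ⊆ σ, ∃ t ∈ T, (∀ i ∈ J, t i = 1) ∧ ∀ i ∈ σ \ J, t i = 0) → #σ ≤ d) :
    (S.image onesSet).vcDim ≤ d := by
  refine Finset.sup_le fun σ hσ => hVC σ fun J hJ => ?_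
  obtain ⟨_, hA, hσA⟩ := mem_shatterer.1 hσ hJ
  obtain ⟨t, ht, rfl⟩ := mem_image.1 hA
  refine ⟨t, hST ht, fun i hi => ?_, fun i hi => ?_⟩
  · rw [← hσA] at hi
    exact mem_onesSet.1 (mem_inter.1 hi).2
  · obtain ⟨hiσ, hiJ⟩ := mem_sdiff.1 hi
    refine (hT t (hST ht) i).resolve_right fun h1 => hiJ ?_
    rw [← hσA]
    exact mem_inter.2 ⟨hiσ, mem_onesSet.2 h1⟩

end BinaryVectors

end Haussler

open Haussler

/-- Haussler-type packing bound: if `T ⊆ {0,1}^n` has VC dimension at most `d`, then for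
every `0 < ε ≤ √n`, any `ε`-separated subset of `T` in the Euclidean metric has
cardinality at most `C(d) (√n/ε)^{2d}`. -/
theorem stmt16 (d : ℕ) : ∃ C > 0, ∀ (n : ℕ) (T : Set (Fin n → ℝ)),
    (∀ t ∈ T, ∀ i, t i = 0 ∨ t i = 1) →
    (∀ σ : Finset (Fin n),
      (∀ J ⊆ σ, ∃ t ∈ T, (∀ i ∈ J, t i = 1) ∧ ∀ i ∈ σ \ J, t i = 0) → σ.card ≤ d) →
    ∀ ε : ℝ, 0 < ε → ε ≤ Real.sqrt n →
    ∀ S : Finset (Fin n → ℝ), ↑S ⊆ T →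
      (∀ a ∈ S, ∀ b ∈ S, a ≠ b → ε ≤ Real.sqrt (∑ i, (a i - b i) ^ 2)) →
      (S.card : ℝ) ≤ C * (Real.sqrt n / ε) ^ (2 * d) := by
  refine ⟨2 * (d + 1) * (4 * d + 1) ^ d, by positivity, ?_⟩
  intro n T hT hVC ε hε hεn S hST hsep
  have hS : ∀ t ∈ S, ∀ i, t i = 0 ∨ t i = 1 := fun t ht => hT t (hST ht)
  have hε2 : 0 < ε ^ 2 := by positivity
  have hkn : ⌈ε ^ 2⌉₊ ≤ Fintype.card (Fin n) := by
    rw [Fintype.card_fin, Nat.ceil_le, ← Real.sq_sqrt n.cast_nonneg]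
    exact pow_le_pow_left₀ hε.le hεn 2
  have hcard := card_le_of_pairwise_le_card_symmDiff
    (pairwise_ceil_sq_le_card_symmDiff hε hS hsep) (vcDim_image_onesSet_le hST hT hVC)
    (Nat.ceil_pos.2 hε2) hkn
  rw [card_image_of_injOn (injOn_onesSet hS), Fintype.card_fin] at hcard
  calc (#S : ℝ) ≤ 2 * (d + 1) * (4 * d + 1) ^ d * (n / ⌈ε ^ 2⌉₊) ^ d := hcard
    _ ≤ 2 * (d + 1) * (4 * d + 1) ^ d * (n / ε ^ 2) ^ d := by
        gcongr
        exact Nat.le_ceil _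
    _ = 2 * (d + 1) * (4 * d + 1) ^ d * (√n / ε) ^ (2 * d) := by
        rw [pow_mul, div_pow (√n), Real.sq_sqrt n.cast_nonneg]
end
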